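/- arXiv:1809.10938 — 7 statements merged into one kernel-verified Lean document; each statement's English description precedes it below -/
import Mathlib

section
/- Let H be a subspace of F_2^n of dimension d and let k ≤ d. Then the number of vectors in H of Hamming weight at most k is at most Σ_{i=0}^{k} C(d,i), the number of vectors of Hamming weight at most k in the subspace spanned by the first d standard basis vectors. -/
/-!
The coordinate functionals span the dual of `H`, so `d` of them form a basis: there is a set `S`
of `d` coordinates on which no nonzero vector of `H` vanishes (an information set). Over `𝔽₂` a
vector is determined by its support, so `v ↦ supp v ∩ S` is injective on `H` and sends vectors of
weight at most `k` to subsets of `S` of size at most `k`.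
-/

open Module Finset

def Submodule.IsInformationSet {K ι : Type*} [Field K] (H : Submodule K (ι → K)) (S : Finset ι) :
    Prop :=
  ∀ v ∈ H, (∀ i ∈ S, v i = 0) → v = 0

section InformationSet

variable {K ι : Type*} [Field K] [Finite ι]

def Submodule.coordDual (H : Submodule K (ι → K)) (i : ι) : Dual K H :=
  (LinearMap.proj i).comp H.subtype

theorem Submodule.span_range_coordDual (H : Submodule K (ι → K)) :
    span K (Set.range H.coordDual) = ⊤ :=
  span_eq_top_of_ne_zero fun x hx => by
    obtain ⟨i, hi⟩ := Function.ne_iff.mp (Subtype.coe_injective.ne hx)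
    exact ⟨H.coordDual i, Set.mem_range_self i, hi⟩

theorem Submodule.exists_isInformationSet_card_eq_finrank (H : Submodule K (ι → K)) :
    ∃ S : Finset ι, #S = finrank K H ∧ H.IsInformationSet S := by
  classical
  obtain ⟨κ, a, ha, hspan, hli⟩ := exists_linearIndependent' K H.coordDual
  rw [H.span_range_coordDual] at hspan
  have : Finite κ := Finite.of_injective a ha
  have : Fintype κ := Fintype.ofFinite κ
  refine ⟨univ.image a, ?_, fun v hv hvS => ?_⟩
  · rw [card_image_of_injective _ ha, card_univ, ← finrank_span_eq_card hli, hspan,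
      finrank_top, Subspace.dual_finrank_eq]
  · have heval : Dual.eval K H ⟨v, hv⟩ = 0 :=
      LinearMap.ext_on_range hspan fun j => hvS (a j) (mem_image_of_mem a (mem_univ j))
    simpa using (forall_dual_apply_eq_zero_iff K (⟨v, hv⟩ : H)).mp (LinearMap.congr_fun heval)

end InformationSet

theorem Finset.card_filter_powerset_card_le {α : Type*} (s : Finset α) (k : ℕ) :
    #{t ∈ s.powerset | #t ≤ k} = ∑ i ∈ range (k + 1), (#s).choose i := by
  classical
  rw [card_eq_sum_card_fiberwise (f := card) (t := range (k + 1))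
    fun t ht => mem_range_succ_iff.mpr (mem_filter.mp ht).2]
  refine sum_congr rfl fun i hi => ?_
  rw [← card_powersetCard, powersetCard_eq_filter, filter_filter]
  congr 1
  exact filter_congr fun t _ => ⟨And.right, fun h => ⟨h ▸ mem_range_succ_iff.mp hi, h⟩⟩

theorem ZMod.eq_of_ne_zero_iff_ne_zero_two {a b : ZMod 2} (h : a ≠ 0 ↔ b ≠ 0) : a = b := by
  revert a b; decide

theorem Submodule.IsInformationSet.ncard_hammingNorm_le {ι : Type*} [Fintype ι]
    {H : Submodule (ZMod 2) (ι → ZMod 2)} {S : Finset ι} (hS : H.IsInformationSet S) (k : ℕ) :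
    {v | v ∈ H ∧ hammingNorm v ≤ k}.ncard ≤ ∑ i ∈ range (k + 1), (#S).choose i := by
  classical
  rw [← S.card_filter_powerset_card_le k, ← Set.ncard_coe_finset]
  refine Set.ncard_le_ncard_of_injOn (fun v => {i ∈ S | v i ≠ 0}) (fun v hv => ?_)
    (fun v hv w hw hvw => ?_) (Set.toFinite _)
  · simp only [coe_filter, mem_powerset, Set.mem_ofPred_eq]
    exact ⟨filter_subset _ _, (card_le_card (filter_subset_filter _ (subset_univ S))).trans hv.2⟩
  · rw [← sub_eq_zero]
    refine hS _ (sub_mem hv.1 hw.1) fun i hi => sub_eq_zero.mpr ?_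
    refine ZMod.eq_of_ne_zero_iff_ne_zero_two ?_
    simpa [hi] using congrArg (i ∈ ·) hvw

theorem stmt2_general (n d k : ℕ) (H : Submodule (ZMod 2) (Fin n → ZMod 2))
    (hd : Module.finrank (ZMod 2) H = d) :
    Set.ncard {v : Fin n → ZMod 2 | v ∈ H ∧ hammingNorm v ≤ k} ≤
      ∑ i ∈ Finset.range (k + 1), d.choose i := by
  obtain ⟨S, hcard, hS⟩ := H.exists_isInformationSet_card_eq_finrank
  rw [← hd, ← hcard]
  exact hS.ncard_hammingNorm_le k

theorem stmt2 (n d k : ℕ) (hk : k ≤ d) (H : Submodule (ZMod 2) (Fin n → ZMod 2))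
    (hd : Module.finrank (ZMod 2) H = d) :
    Set.ncard {v : Fin n → ZMod 2 | v ∈ H ∧ hammingNorm v ≤ k} ≤
      ∑ i ∈ Finset.range (k + 1), d.choose i :=
  stmt2_general n d k H hd
end

section
/- For every δ > 0 there exists a positive integer k depending only on δ with the following property: for all positive integers n_1, n_2 and every subset ℬ' ⊆ F_2^{n_1}×F_2^{n_2} with |ℬ'| ≥ δ·2^{n_1+n_2}, there exist a subspace U ⊆ F_2^{n_1} of codimension at most k and, for each u ∈ U, a subspace V_u ⊆ F_2^{n_2} of codimension at most k, with all the subspaces V_u having the same codimension, such that for every u ∈ U and every v ∈ V_u the matrix u⊗v is a sum of at most 16 matrices u'⊗v' with (u',v') ∈ ℬ'. -/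
/-!
Call a row `u` dense if its fibre `{v | (u, v) ∈ ℬ'}` has density at least `δ / 2`; the dense
rows then have density at least `δ / 2` themselves. Bogolyubov's lemma in `F₂ⁿ` says that
`A + A + A + A` contains a subspace of codimension at most `4 / α⁴` when `A` has density `α`:
the subspace orthogonal to the large spectrum of `1_A`, because the Fourier expansion of the
number of representations `x = a + b + c + d` is dominated by its term at `ξ = 0` there.
Applying it to the dense rows gives `U`, and to the fibre of each dense row `a` gives `W a`.
If `u = a + b + c + d ∈ U` and `v` lies in `W a ⊓ W b ⊓ W c ⊓ W d`, then `v` is a sum of four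
elements of each of the four fibres, so `u ⊗ v` is a sum of `16` tensors from `ℬ'`; shrinking
that intersection to a fixed dimension makes all codimensions equal.
-/

/-- `M ∈ cℬ'`: `M` is a sum of at most `c` rank-one matrices `u ⊗ v` with `(u, v) ∈ ℬ'`. -/
def IsSumAtMost (n₁ n₂ c : ℕ) (B' : Finset ((Fin n₁ → ZMod 2) × (Fin n₂ → ZMod 2)))
    (M : Matrix (Fin n₁) (Fin n₂) (ZMod 2)) : Prop :=
  ∃ s : Multiset ((Fin n₁ → ZMod 2) × (Fin n₂ → ZMod 2)),
    Multiset.card s ≤ c ∧ (∀ p ∈ s, p ∈ B') ∧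
    M = (s.map (fun p => Matrix.vecMulVec p.1 p.2)).sum

open Finset Matrix Module

theorem AddChar.map_sum_eq_prod {A M κ : Type*} [AddCommMonoid A] [CommMonoid M]
    (ψ : AddChar A M) (s : Finset κ) (f : κ → A) : ψ (∑ i ∈ s, f i) = ∏ i ∈ s, ψ (f i) := by
  classical
  induction s using Finset.induction_on with
  | empty => simp
  | insert a s ha ih => rw [sum_insert ha, prod_insert ha, AddChar.map_add_eq_mul, ih]

theorem Matrix.card_sub_finrank_ker_mulVecLin_le {K m n : Type*} [Field K] [Fintype m]
    [Fintype n] (M : Matrix m n K) :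
    Fintype.card n - finrank K (LinearMap.ker M.mulVecLin) ≤ Fintype.card m := by
  have hrank := LinearMap.finrank_range_add_finrank_ker M.mulVecLin
  have hle : M.rank ≤ Fintype.card m := M.rank_le_card_height
  rw [finrank_fintype_fun_eq_card] at hrank
  unfold Matrix.rank at hle
  omega

section

variable {K E : Type*} [DivisionRing K] [AddCommGroup E] [Module K E]

theorem Submodule.exists_le_finrank_eq (W : Submodule K E) {d : ℕ} (hd : d ≤ finrank K W) :
    ∃ W' ≤ W, finrank K W' = d := by
  obtain ⟨f, hf⟩ := exists_linearIndependent_of_le_finrank hd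
  refine ⟨Submodule.span K (Set.range (W.subtype ∘ f)), ?_, ?_⟩
  · exact Submodule.span_le.2 (Set.range_subset_iff.2 fun i => (f i).2)
  · rw [finrank_span_eq_card (hf.map' W.subtype W.ker_subtype), Fintype.card_fin]

theorem Submodule.finrank_sub_finrank_inf_le [FiniteDimensional K E] {κ : Type*} (s : Finset κ)
    (W : κ → Submodule K E) :
    finrank K E - finrank K (s.inf W : Submodule K E) ≤
      ∑ i ∈ s, (finrank K E - finrank K (W i)) := by
  classical
  induction s using Finset.induction_on with
  | empty => rw [inf_empty, finrank_top, Nat.sub_self]; exact Nat.zero_le _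
  | insert i s hi ih =>
    rw [inf_insert, sum_insert hi]
    have hsup := Submodule.finrank_sup_add_finrank_inf_eq (W i) (s.inf W)
    have hle := Submodule.finrank_le (W i ⊔ s.inf W)
    omega

end

theorem Finset.le_card_dense_fibers {α β : Type*} [Fintype α] [Fintype β] [Nonempty β]
    [DecidableEq α] [DecidableEq β] (B : Finset (α × β)) {δ : ℝ} (hδ : 0 ≤ δ)
    (hB : δ * (Fintype.card α * Fintype.card β) ≤ #B) :
    δ / 2 * Fintype.card α ≤ #{a | δ / 2 * Fintype.card β ≤ #{b | (a, b) ∈ B}} := by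
  set D : Finset α := {a | δ / 2 * Fintype.card β ≤ #{b | (a, b) ∈ B}}
  have hfib : #B = ∑ a, #{b | (a, b) ∈ B} := by
    simp only [card_filter, ← Fintype.sum_prod_type']
    rw [← card_filter, filter_univ_mem]
  have hrow (a) : (#{b | (a, b) ∈ B} : ℝ) ≤
      (if a ∈ D then (Fintype.card β : ℝ) else 0) + δ / 2 * Fintype.card β := by
    split_ifs with ha
    · have : (#{b | (a, b) ∈ B} : ℝ) ≤ Fintype.card β := by exact_mod_cast card_le_univ _
      nlinarith
    · simpa using (not_le.1 fun h => ha (mem_filter.2 ⟨mem_univ a, h⟩)).le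
  have hsum : (#B : ℝ) ≤ #D * Fintype.card β + Fintype.card α * (δ / 2 * Fintype.card β) :=
    calc (#B : ℝ)
        ≤ ∑ a, ((if a ∈ D then (Fintype.card β : ℝ) else 0) + δ / 2 * Fintype.card β) := by
          rw [hfib, Nat.cast_sum]
          exact sum_le_sum fun a _ => hrow a
      _ = _ := by
          rw [sum_add_distrib, Fintype.sum_ite_mem, sum_const, sum_const, card_univ, nsmul_eq_mul,
            nsmul_eq_mul]
  have hβ : (0 : ℝ) < Fintype.card β := by exact_mod_cast Fintype.card_pos
  nlinarith

namespace F2Fourier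

def signChar : AddChar (ZMod 2) ℝ where
  toFun t := (-1) ^ t.val
  map_zero_eq_one' := by simp
  map_add_eq_mul' s t := by rw [ZMod.val_add, ← neg_one_pow_eq_pow_mod_two, pow_add]

lemma signChar_one : signChar 1 = -1 := by
  simp [signChar, ZMod.val_one]

lemma zmod_two_eq_zero_or_one : ∀ t : ZMod 2, t = 0 ∨ t = 1 := by decide

lemma neg_one_le_signChar (t : ZMod 2) : -1 ≤ signChar t := by
  rcases zmod_two_eq_zero_or_one t with rfl | rfl <;> norm_num [signChar_one]

variable {ι : Type*} [Fintype ι]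

def chi (ξ : ι → ZMod 2) : AddChar (ι → ZMod 2) ℝ where
  toFun x := signChar (ξ ⬝ᵥ x)
  map_zero_eq_one' := by simp
  map_add_eq_mul' x y := by rw [dotProduct_add, AddChar.map_add_eq_mul]

lemma chi_apply (ξ x : ι → ZMod 2) : chi ξ x = signChar (ξ ⬝ᵥ x) := rfl

lemma chi_comm (ξ x : ι → ZMod 2) : chi ξ x = chi x ξ := by
  rw [chi_apply, chi_apply, dotProduct_comm]

lemma chi_eq_zero_iff {x : ι → ZMod 2} : chi x = 0 ↔ x = 0 := by
  classical
  refine ⟨fun h => ?_, fun h => by ext ξ; simp [h, chi_apply]⟩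
  by_contra hx
  obtain ⟨i, hi⟩ := Function.ne_iff.mp hx
  have hxi : x i = 1 := (zmod_two_eq_zero_or_one _).resolve_left hi
  have := congrArg (· (Pi.single i 1)) h
  norm_num [chi_apply, hxi, signChar_one] at this

variable [DecidableEq ι]

lemma sum_chi_apply (x : ι → ZMod 2) :
    ∑ ξ, chi ξ x = if x = 0 then (2 : ℝ) ^ Fintype.card ι else 0 := by
  simp_rw [chi_comm _ x, AddChar.sum_eq_ite, chi_eq_zero_iff]
  simp

def coeff (A : Finset (ι → ZMod 2)) (ξ : ι → ZMod 2) : ℝ := ∑ a ∈ A, chi ξ a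

lemma sum_coeff_pow_mul_chi (A : Finset (ι → ZMod 2)) (m : ℕ) (x : ι → ZMod 2) :
    ∑ ξ, coeff A ξ ^ m * chi ξ x =
      2 ^ Fintype.card ι * #{p ∈ Fintype.piFinset fun _ : Fin m => A | ∑ i, p i = x} := by
  calc ∑ ξ, coeff A ξ ^ m * chi ξ x
      = ∑ ξ, ∑ p ∈ Fintype.piFinset fun _ : Fin m => A, chi ξ (∑ i, p i + x) := by
        simp_rw [coeff, sum_pow', sum_mul, AddChar.map_add_eq_mul, AddChar.map_sum_eq_prod]
    _ = ∑ p ∈ Fintype.piFinset fun _ : Fin m => A, ∑ ξ, chi ξ (∑ i, p i + x) := sum_comm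
    _ = _ := by
        simp_rw [sum_chi_apply, add_eq_zero_iff_eq_neg, ZModModule.neg_eq_self]
        rw [sum_ite, sum_const_zero, add_zero, sum_const, nsmul_eq_mul, mul_comm]

lemma sum_coeff_sq_le (A : Finset (ι → ZMod 2)) :
    ∑ ξ, coeff A ξ ^ 2 ≤ ((2 : ℝ) ^ Fintype.card ι) ^ 2 := by
  have h := sum_coeff_pow_mul_chi A 2 0
  simp only [AddChar.map_zero_eq_one, mul_one] at h
  rw [h, sq]
  gcongr
  have hinj : Set.InjOn (fun p : Fin 2 → ι → ZMod 2 => p 0)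
      ({p ∈ Fintype.piFinset fun _ : Fin 2 => A | ∑ i, p i = 0} : Finset _) := by
    intro p hp q hq (h0 : p 0 = q 0)
    simp only [coe_filter, Set.mem_ofPred_eq, Fin.sum_univ_two, h0] at hp hq
    exact funext (Fin.forall_fin_two.2 ⟨h0, add_left_cancel (hp.2.trans hq.2.symm)⟩)
  calc (#{p ∈ Fintype.piFinset fun _ : Fin 2 => A | ∑ i, p i = 0} : ℝ)
      ≤ Fintype.card (ι → ZMod 2) :=
        mod_cast card_le_card_of_injOn _ (fun _ _ => mem_univ _) hinj
    _ = 2 ^ Fintype.card ι := by simp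

noncomputable def largeSpectrum (A : Finset (ι → ZMod 2)) (T : ℝ) : Finset (ι → ZMod 2) :=
  {ξ | T ≤ coeff A ξ ^ 2}

lemma card_largeSpectrum_mul_le (A : Finset (ι → ZMod 2)) (T : ℝ) :
    #(largeSpectrum A T) * T ≤ ((2 : ℝ) ^ Fintype.card ι) ^ 2 :=
  calc #(largeSpectrum A T) * T = ∑ _ξ ∈ largeSpectrum A T, T := by
        rw [sum_const, nsmul_eq_mul]
    _ ≤ ∑ ξ ∈ largeSpectrum A T, coeff A ξ ^ 2 := sum_le_sum fun ξ hξ => (mem_filter.1 hξ).2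
    _ ≤ ∑ ξ, coeff A ξ ^ 2 :=
        sum_le_sum_of_subset_of_nonneg (subset_univ _) fun _ _ _ => sq_nonneg _
    _ ≤ _ := sum_coeff_sq_le A

lemma exists_sum_eq_of_forall_largeSpectrum_dotProduct_eq_zero (A : Finset (ι → ZMod 2))
    {α : ℝ} (hα : 0 < α) (hA : α * 2 ^ Fintype.card ι ≤ #A) {x : ι → ZMod 2}
    (hx : ∀ ξ ∈ largeSpectrum A (α ^ 4 * ((2 : ℝ) ^ Fintype.card ι) ^ 2 / 4), ξ ⬝ᵥ x = 0) :
    ∃ p : Fin 4 → ι → ZMod 2, (∀ i, p i ∈ A) ∧ ∑ i, p i = x := by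
  set N : ℝ := 2 ^ Fintype.card ι
  set T := α ^ 4 * N ^ 2 / 4
  have hT : 0 ≤ T := by positivity
  -- On the large spectrum `chi ξ x = 1`; off it `coeff A ξ ^ 2 < T`.
  have hterm (ξ) : coeff A ξ ^ 4 - 2 * T * coeff A ξ ^ 2 ≤ coeff A ξ ^ 4 * chi ξ x := by
    by_cases hξ : ξ ∈ largeSpectrum A T
    · rw [chi_apply, hx ξ hξ, AddChar.map_zero_eq_one]
      nlinarith [sq_nonneg (coeff A ξ)]
    · have hsmall : coeff A ξ ^ 2 < T := by simpa [largeSpectrum] using hξ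
      have h1 := mul_le_mul_of_nonneg_left (neg_one_le_signChar (ξ ⬝ᵥ x))
        (by positivity : 0 ≤ coeff A ξ ^ 4)
      have h2 := mul_le_mul_of_nonneg_left hsmall.le (sq_nonneg (coeff A ξ))
      rw [chi_apply]
      nlinarith
  have hmain : α ^ 4 * N ^ 4 ≤ ∑ ξ, coeff A ξ ^ 4 :=
    calc α ^ 4 * N ^ 4 = (α * N) ^ 4 := by ring
      _ ≤ coeff A 0 ^ 4 := by
        simp only [coeff, chi_apply, zero_dotProduct, AddChar.map_zero_eq_one, sum_const,
          nsmul_one]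
        gcongr
      _ ≤ ∑ ξ, coeff A ξ ^ 4 :=
        single_le_sum (f := fun ξ => coeff A ξ ^ 4) (fun ξ _ => by positivity) (mem_univ 0)
  have hpos : 0 < ∑ ξ, coeff A ξ ^ 4 * chi ξ x :=
    calc (0 : ℝ) < α ^ 4 * N ^ 4 - 2 * T * N ^ 2 := by
          simp only [T]; nlinarith [show 0 < α ^ 4 * N ^ 4 by positivity]
      _ ≤ ∑ ξ, coeff A ξ ^ 4 - 2 * T * ∑ ξ, coeff A ξ ^ 2 := by
          gcongr
          exact sum_coeff_sq_le A
      _ ≤ ∑ ξ, coeff A ξ ^ 4 * chi ξ x := by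
          rw [mul_sum, ← sum_sub_distrib]
          exact sum_le_sum fun ξ _ => hterm ξ
  rw [sum_coeff_pow_mul_chi, mul_pos_iff_of_pos_left (by positivity), Nat.cast_pos,
    card_pos] at hpos
  obtain ⟨p, hp⟩ := hpos
  rw [mem_filter, Fintype.mem_piFinset] at hp
  exact ⟨p, hp⟩

theorem exists_submodule_subset_fourfold_sums (A : Finset (ι → ZMod 2)) {α : ℝ} (hα : 0 < α)
    (hA : α * 2 ^ Fintype.card ι ≤ #A) :
    ∃ V : Submodule (ZMod 2) (ι → ZMod 2), Fintype.card ι - finrank (ZMod 2) V ≤ ⌊4 / α ^ 4⌋₊ ∧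
      ∀ x ∈ V, ∃ p : Fin 4 → ι → ZMod 2, (∀ i, p i ∈ A) ∧ ∑ i, p i = x := by
  set N : ℝ := 2 ^ Fintype.card ι
  set S := largeSpectrum A (α ^ 4 * N ^ 2 / 4)
  refine ⟨LinearMap.ker (Matrix.of fun (ξ : S) => (ξ : ι → ZMod 2)).mulVecLin, ?_, fun x hx =>
    exists_sum_eq_of_forall_largeSpectrum_dotProduct_eq_zero A hα hA fun ξ hξ =>
      congrFun (LinearMap.mem_ker.1 hx) ⟨ξ, hξ⟩⟩
  refine (Matrix.card_sub_finrank_ker_mulVecLin_le _).trans (Nat.le_floor ?_)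
  have hS := card_largeSpectrum_mul_le A (α ^ 4 * N ^ 2 / 4)
  rw [Fintype.card_coe, le_div_iff₀ (by positivity)]
  nlinarith [show 0 < N ^ 2 by positivity]

end F2Fourier

theorem isSumAtMost_vecMulVec_sum {n₁ n₂ m l : ℕ}
    (B' : Finset ((Fin n₁ → ZMod 2) × (Fin n₂ → ZMod 2))) (a : Fin m → Fin n₁ → ZMod 2)
    (b : Fin m → Fin l → Fin n₂ → ZMod 2) {v : Fin n₂ → ZMod 2} (hB' : ∀ i j, (a i, b i j) ∈ B')
    (hb : ∀ i, ∑ j, b i j = v) :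
    IsSumAtMost n₁ n₂ (m * l) B' (vecMulVec (∑ i, a i) v) := by
  refine ⟨univ.val.map fun q : Fin m × Fin l => (a q.1, b q.1 q.2), by simp, ?_, ?_⟩
  · simp only [Multiset.mem_map, mem_val, mem_univ, true_and, Prod.exists]
    rintro _ ⟨i, j, rfl⟩
    exact hB' i j
  rw [Multiset.map_map, ← sum_eq_multiset_sum, Fintype.sum_prod_type]
  calc vecMulVec (∑ i, a i) v = ∑ i, vecMulVec (a i) v := by
        ext; simp [vecMulVec_apply, sum_mul, Matrix.sum_apply]
    _ = ∑ i, ∑ j, vecMulVec (a i) (b i j) := by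
        refine sum_congr rfl fun i _ => ?_
        ext; simp [vecMulVec_apply, mul_sum, Matrix.sum_apply, ← hb i]

theorem exists_finrank_eq_forall_isSumAtMost_vecMulVec {n₁ n₂ m l K : ℕ}
    (B' : Finset ((Fin n₁ → ZMod 2) × (Fin n₂ → ZMod 2))) (p : Fin m → Fin n₁ → ZMod 2)
    (W : Fin m → Submodule (ZMod 2) (Fin n₂ → ZMod 2))
    (hcodim : ∀ i, n₂ - finrank (ZMod 2) (W i) ≤ K)
    (hW : ∀ i, ∀ v ∈ W i, ∃ q : Fin l → Fin n₂ → ZMod 2, (∀ j, (p i, q j) ∈ B') ∧ ∑ j, q j = v) :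
    ∃ V : Submodule (ZMod 2) (Fin n₂ → ZMod 2), finrank (ZMod 2) V = n₂ - m * K ∧
      ∀ v ∈ V, IsSumAtMost n₁ n₂ (m * l) B' (vecMulVec (∑ i, p i) v) := by
  have hcodim_inf : n₂ - finrank (ZMod 2) (univ.inf W : Submodule _ _) ≤ m * K :=
    calc _ ≤ ∑ i, (n₂ - finrank (ZMod 2) (W i)) := by
          simpa using Submodule.finrank_sub_finrank_inf_le univ W
      _ ≤ ∑ _i : Fin m, K := sum_le_sum fun i _ => hcodim i
      _ = m * K := by simp
  have hle := Submodule.finrank_le (univ.inf W)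
  rw [finrank_fin_fun] at hle
  obtain ⟨V, hVW, hV⟩ := (univ.inf W).exists_le_finrank_eq (d := n₂ - m * K) (by omega)
  refine ⟨V, hV, fun v hv => ?_⟩
  choose q hqB hq using fun i => hW i v (inf_le (f := W) (mem_univ i) (hVW hv))
  exact isSumAtMost_vecMulVec_sum B' p q hqB hq

theorem stmt8 (δ : ℝ) (hδ : 0 < δ) :
    ∃ k : ℕ, 0 < k ∧
      ∀ n₁ n₂ : ℕ, 0 < n₁ → 0 < n₂ →
        ∀ B' : Finset ((Fin n₁ → ZMod 2) × (Fin n₂ → ZMod 2)),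
          δ * 2 ^ (n₁ + n₂) ≤ (B'.card : ℝ) →
          ∃ U : Submodule (ZMod 2) (Fin n₁ → ZMod 2),
            n₁ - Module.finrank (ZMod 2) U ≤ k ∧
            ∃ V : (Fin n₁ → ZMod 2) → Submodule (ZMod 2) (Fin n₂ → ZMod 2),
              (∀ u ∈ U, n₂ - Module.finrank (ZMod 2) (V u) ≤ k) ∧
              (∀ u ∈ U, ∀ u' ∈ U,
                Module.finrank (ZMod 2) (V u) = Module.finrank (ZMod 2) (V u')) ∧
              ∀ u ∈ U, ∀ v ∈ V u, IsSumAtMost n₁ n₂ 16 B' (Matrix.vecMulVec u v) := by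
  set α := δ / 2
  have hα : 0 < α := by positivity
  set K := ⌊4 / α ^ 4⌋₊
  refine ⟨4 * K + 1, by omega, fun n₁ n₂ _ hn₂ B' hB' => ?_⟩
  have : Nonempty (Fin n₂) := ⟨⟨0, hn₂⟩⟩
  set D : Finset (Fin n₁ → ZMod 2) := {a | α * 2 ^ n₂ ≤ #{b | (a, b) ∈ B'}}
  have hD : α * 2 ^ n₁ ≤ #D := by
    have := B'.le_card_dense_fibers hδ.le (by simpa [pow_add, mul_comm] using hB')
    simpa [Fintype.card_fun, mul_comm] using this
  obtain ⟨U, hU, hUD⟩ := F2Fourier.exists_submodule_subset_fourfold_sums D hα (by simpa using hD)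
  have hW : ∀ a ∈ D, ∃ W : Submodule (ZMod 2) (Fin n₂ → ZMod 2), n₂ - finrank (ZMod 2) W ≤ K ∧
      ∀ v ∈ W, ∃ q : Fin 4 → Fin n₂ → ZMod 2, (∀ j, (a, q j) ∈ B') ∧ ∑ j, q j = v := by
    intro a ha
    obtain ⟨W, hW, hWB⟩ := F2Fourier.exists_submodule_subset_fourfold_sums {b | (a, b) ∈ B'} hα
      (by simpa using (mem_filter.1 ha).2)
    exact ⟨W, by simpa using hW, fun v hv => by simpa using hWB v hv⟩
  choose! W hWK hWB using hW
  have hV : ∀ u ∈ U, ∃ V : Submodule (ZMod 2) (Fin n₂ → ZMod 2),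
      finrank (ZMod 2) V = n₂ - 4 * K ∧ ∀ v ∈ V, IsSumAtMost n₁ n₂ 16 B' (vecMulVec u v) := by
    intro u hu
    obtain ⟨p, hpD, rfl⟩ := hUD u hu
    exact exists_finrank_eq_forall_isSumAtMost_vecMulVec B' p (W ∘ p) (fun i => hWK _ (hpD i))
      fun i => hWB _ (hpD i)
  choose! V hVrank hVB using hV
  refine ⟨U, by simpa using hU.trans (by omega), V, fun u hu => ?_, fun u hu u' hu' => ?_, hVB⟩
  · rw [hVrank u hu]; omega
  · rw [hVrank u hu, hVrank u' hu']
end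

section
/- For every positive integer k there exist a real number ρ > 0 and a positive integer L, both depending only on k, with the following property. Let n_1, n_2 be positive integers, let U ⊆ F_2^{n_1} be a subspace of codimension at most k, and for each u ∈ U let V_u ⊆ F_2^{n_2} be a subspace of codimension at most k, with all the V_u having the same codimension. Let Q be the multiset of matrices u⊗v indexed by pairs (u,v) with u ∈ U and v ∈ V_u. Let m = 2^{k+3} and let r_1,…,r_m ∈ 𝒢 be such that for every i ≤ m there are at least (3/4)|Q| pairs (u,v), with u ∈ U and v ∈ V_u, satisfying r_i·(u⊗v) = 0. Then there exist i ≠ j such that |{w ∈ F_2^{n_1} : (r_i−r_j)w = 0}| ≥ ρ·2^{n_1}; in particular, the matrix r_i−r_j has rank at most L. -/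
/-!
Say that `r` annihilates the fibre `u ⊗ V_u` of `Q` if `r · (u ⊗ v) = 0` for all `v ∈ V_u`.
Otherwise `v ↦ r · (u ⊗ v) = (r u) · v` is a nonzero functional on `V_u` and vanishes on exactly
half of it; as all fibres have the same size, the `3/4` hypothesis forces every `r_i` to
annihilate at least half of the fibres over `U`. Double counting then gives at least `3|U|/8`
vectors `u ∈ U` with more than `2^k` indices `i` such that `r_i u ∈ V_u^⊥`. Since
`|V_u^⊥| ≤ 2^k`, two of these vectors coincide: `(r_i - r_j) u = 0` for some `i ≠ j`. One pair
`i ≠ j` serves at least a `1/m²` share of these `u`, so the kernel of `w ↦ (r_i - r_j) w` has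
at least `2^{n_1 - 3k - 9}` elements, which also bounds the rank of `r_i - r_j` by `3k + 9`.
-/

/-- The entrywise dot product of two matrices over `F_2`. -/
def matDot (n₁ n₂ : ℕ) (r q : Matrix (Fin n₁) (Fin n₂) (ZMod 2)) : ZMod 2 :=
  ∑ i, ∑ j, r i j * q i j

/-- The subspace `W ⊗ F_2^{n₂}` of matrices all of whose columns lie in `W`. -/
def colCyl (n₁ n₂ : ℕ) (W : Submodule (ZMod 2) (Fin n₁ → ZMod 2)) :
    Submodule (ZMod 2) (Matrix (Fin n₁) (Fin n₂) (ZMod 2)) where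
  carrier := {r | ∀ j, (fun i => r i j) ∈ W}
  add_mem' := fun ha hb j => W.add_mem (ha j) (hb j)
  zero_mem' := fun j => W.zero_mem
  smul_mem' := fun c _ hr j => W.smul_mem c (hr j)

/-- The subspace `F_2^{n₁} ⊗ W` of matrices all of whose rows lie in `W`. -/
def rowCyl (n₁ n₂ : ℕ) (W : Submodule (ZMod 2) (Fin n₂ → ZMod 2)) :
    Submodule (ZMod 2) (Matrix (Fin n₁) (Fin n₂) (ZMod 2)) where
  carrier := {r | ∀ i, (fun j => r i j) ∈ W}
  add_mem' := fun ha hb i => W.add_mem (ha i) (hb i)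
  zero_mem' := fun i => W.zero_mem
  smul_mem' := fun c _ hr i => W.smul_mem c (hr i)

/-- The number of pairs `(u, v)` indexing the multiset `Q = {u ⊗ v : u ∈ U, v ∈ V_u}`
that satisfy the predicate `p`. -/
noncomputable def qCount (n₁ n₂ : ℕ) (U : Submodule (ZMod 2) (Fin n₁ → ZMod 2))
    (V : (Fin n₁ → ZMod 2) → Submodule (ZMod 2) (Fin n₂ → ZMod 2))
    (p : (Fin n₁ → ZMod 2) → (Fin n₂ → ZMod 2) → Prop) : ℕ :=
  Set.ncard {q : (Fin n₁ → ZMod 2) × (Fin n₂ → ZMod 2) |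
    q.1 ∈ U ∧ q.2 ∈ V q.1 ∧ p q.1 q.2}
open Finset Matrix Module

section FiniteField

variable {K : Type*} [Field K] [Fintype K]

theorem card_filter_mem_submodule {M : Type*} [AddCommGroup M] [Module K M] [Fintype M]
    (W : Submodule K M) [DecidablePred (· ∈ W)] :
    #{x | x ∈ W} = Fintype.card K ^ finrank K W := by
  rw [← Fintype.card_subtype, ← card_eq_pow_finrank]

theorem card_filter_forall_dotProduct_eq_zero {ι : Type*} [Fintype ι] [DecidableEq ι]
    (V : Submodule K (ι → K)) [DecidablePred fun x : ι → K => ∀ v ∈ V, x ⬝ᵥ v = 0] :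
    #{x : ι → K | ∀ v ∈ V, x ⬝ᵥ v = 0} = Fintype.card K ^ (Fintype.card ι - finrank K V) := by
  classical
  let W := V.dualAnnihilator.comap (dotProductEquiv K ι).toLinearMap
  have hW : ∀ x, x ∈ W ↔ ∀ v ∈ V, x ⬝ᵥ v = 0 := fun x => by
    simp [W, Submodule.mem_dualAnnihilator]
  have hrank : finrank K W = finrank K V.dualAnnihilator :=
    (Submodule.equivMapOfInjective _ (dotProductEquiv K ι).injective W).finrank_eq.trans <| by
      rw [Submodule.map_comap_eq_of_surjective (dotProductEquiv K ι).surjective]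
  have hdual := Subspace.finrank_add_finrank_dualAnnihilator_eq V
  simp only [finrank_fintype_fun_eq_card] at hdual
  rw [Finset.filter_congr fun x _ => (hW x).symm, card_filter_mem_submodule, hrank]
  congr 1
  omega

theorem exists_ne_vecMul_sub_eq_zero {m n ι : Type*} [Fintype m] [Fintype n]
    (V : Submodule K (n → K)) {k : ℕ} (hV : Fintype.card n - finrank K V ≤ k)
    (u : m → K) (r : ι → Matrix m n K) (I : Finset ι)
    (hI : Fintype.card K ^ k < #I) (hIV : ∀ i ∈ I, ∀ v ∈ V, u ᵥ* r i ⬝ᵥ v = 0) :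
    ∃ i j, i ≠ j ∧ u ᵥ* (r i - r j) = 0 := by
  classical
  have hcard : #{x : n → K | ∀ v ∈ V, x ⬝ᵥ v = 0} < #I := by
    rw [card_filter_forall_dotProduct_eq_zero]
    exact (Nat.pow_le_pow_right Fintype.card_pos hV).trans_lt hI
  obtain ⟨i, -, j, -, hij, heq⟩ := exists_ne_map_eq_of_card_lt_of_maps_to hcard
    (f := fun i => u ᵥ* r i) fun i hi => by simpa using hIV i hi
  exact ⟨i, j, hij, by rw [vecMul_sub, heq, sub_self]⟩

theorem ncard_vecMul_eq_zero_mul_pow_rank {m n : Type*} [Fintype m] [Fintype n]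
    (A : Matrix m n K) :
    {w : m → K | w ᵥ* A = 0}.ncard * Fintype.card K ^ A.rank = Fintype.card K ^ Fintype.card m := by
  classical
  have hker : {w : m → K | w ᵥ* A = 0} = (LinearMap.ker Aᵀ.mulVecLin : Set (m → K)) := by
    ext w; simp
  have hrank : A.rank + finrank K (LinearMap.ker Aᵀ.mulVecLin) = Fintype.card m := by
    rw [← A.rank_transpose, Matrix.rank, LinearMap.finrank_range_add_finrank_ker,
      finrank_fintype_fun_eq_card]
  rw [hker, ← Nat.card_coe_set_eq, SetLike.coe_sort_coe, Nat.card_eq_fintype_card,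
    card_eq_pow_finrank (K := K), ← pow_add, ← hrank, add_comm]

theorem rank_le_of_pow_card_le_mul_ncard {m n : Type*} [Fintype m] [Fintype n]
    (A : Matrix m n K) {L : ℕ}
    (h : Fintype.card K ^ Fintype.card m ≤
      Fintype.card K ^ L * {w : m → K | w ᵥ* A = 0}.ncard) :
    A.rank ≤ L := by
  have hker := ncard_vecMul_eq_zero_mul_pow_rank A
  have hq : 0 < Fintype.card K ^ Fintype.card m := pow_pos Fintype.card_pos _
  refine (Nat.pow_le_pow_iff_right (Fintype.one_lt_card (α := K))).mp
    (le_of_mul_le_mul_right ?_ hq)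
  calc Fintype.card K ^ A.rank * Fintype.card K ^ Fintype.card m
      ≤ Fintype.card K ^ A.rank * (Fintype.card K ^ L * {w : m → K | w ᵥ* A = 0}.ncard) :=
        Nat.mul_le_mul_left _ h
    _ = Fintype.card K ^ L * Fintype.card K ^ Fintype.card m := by rw [← hker]; ring

end FiniteField

theorem ZMod.ne_zero_iff_eq_one {a : ZMod 2} : a ≠ 0 ↔ a = 1 := by
  revert a; decide

theorem two_mul_card_filter_dotProduct_eq_zero {ι : Type*} [Fintype ι] [DecidableEq ι]
    (V : Submodule (ZMod 2) (ι → ZMod 2)) [DecidablePred (· ∈ V)] {x : ι → ZMod 2}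
    (hx : ∃ v ∈ V, x ⬝ᵥ v ≠ 0) :
    2 * #{v | v ∈ V ∧ x ⬝ᵥ v = 0} = #{v | v ∈ V} := by
  obtain ⟨v₀, hv₀, hxv₀⟩ := hx
  have hinv : ∀ v : ι → ZMod 2, v + v₀ + v₀ = v := fun v => by
    rw [add_assoc, ZModModule.add_self, add_zero]
  -- translation by `v₀` swaps the two halves of `V` cut out by `x`
  have hswap : #{v | v ∈ V ∧ ¬x ⬝ᵥ v = 0} = #{v | v ∈ V ∧ x ⬝ᵥ v = 0} := by
    refine card_nbij' (· + v₀) (· + v₀) ?_ ?_ (fun v _ => hinv v) (fun v _ => hinv v) <;>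
      intro v hv <;>
      simp only [coe_filter, mem_univ, true_and, Set.mem_ofPred_eq, dotProduct_add,
        ZMod.ne_zero_iff_eq_one] at hv hxv₀ ⊢ <;>
      refine ⟨V.add_mem hv.1 hv₀, ?_⟩ <;>
      rw [hv.2, hxv₀] <;> decide
  rw [two_mul]
  nth_rw 2 [← hswap]
  rw [← filter_filter, ← filter_filter, card_filter_add_card_filter_not]

theorem card_mul_card_le_two_mul_card_filter_lt {α ι : Type*} [DecidableEq α] [Fintype ι]
    (S : Finset α) (B : ι → Finset α) (hBS : ∀ i, B i ⊆ S) (hB : ∀ i, #S ≤ 2 * #(B i)) (t : ℕ) :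
    Fintype.card ι * #S ≤
      2 * (Fintype.card ι * #{u ∈ S | t < #{i | u ∈ B i}} + t * #S) := by
  set often := {u ∈ S | t < #{i | u ∈ B i}}
  have hcount : ∑ u ∈ S, #{i | u ∈ B i} = ∑ i, #(B i) := by
    simp only [card_filter]
    rw [sum_comm]
    refine sum_congr rfl fun i _ => ?_
    rw [← card_filter, filter_mem_eq_inter, inter_eq_right.mpr (hBS i)]
  have hsplit : ∑ u ∈ S, #{i | u ∈ B i} ≤ Fintype.card ι * #often + t * #S := by
    rw [← sum_filter_add_sum_filter_not S fun u => t < #{i | u ∈ B i}]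
    gcongr
    · calc ∑ u ∈ often, #{i | u ∈ B i} ≤ ∑ _u ∈ often, Fintype.card ι :=
            sum_le_sum fun u _ => (card_filter_le _ _).trans_eq card_univ
        _ = Fintype.card ι * #often := by rw [sum_const, smul_eq_mul, mul_comm]
    · calc ∑ u ∈ S with ¬t < #{i | u ∈ B i}, #{i | u ∈ B i}
            ≤ ∑ u ∈ S with ¬t < #{i | u ∈ B i}, t := sum_le_sum fun u hu => by
              simpa using (mem_filter.mp hu).2
        _ ≤ t * #S := by
            rw [sum_const, smul_eq_mul, mul_comm]
            exact Nat.mul_le_mul_left t (card_filter_le _ _)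
  calc Fintype.card ι * #S = ∑ _i : ι, #S := by rw [sum_const, card_univ, smul_eq_mul]
    _ ≤ ∑ i, 2 * #(B i) := sum_le_sum fun i _ => hB i
    _ = 2 * ∑ u ∈ S, #{i | u ∈ B i} := by rw [← mul_sum, hcount]
    _ ≤ _ := Nat.mul_le_mul_left 2 hsplit

theorem exists_card_le_mul_card_of_subset_biUnion {α β : Type*} [DecidableEq α] {G : Finset α}
    (hG : G.Nonempty) {P : Finset β} (C : β → Finset α) (hGC : G ⊆ P.biUnion C) :
    ∃ p ∈ P, #G ≤ #P * #(C p) := by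
  have hP : P.Nonempty := by
    obtain ⟨u, hu⟩ := hG
    obtain ⟨p, hp, -⟩ := mem_biUnion.mp (hGC hu)
    exact ⟨p, hp⟩
  refine exists_le_of_sum_le hP ?_
  calc ∑ _p ∈ P, #G = #P * #G := by rw [sum_const, smul_eq_mul]
    _ ≤ #P * ∑ p ∈ P, #(C p) := Nat.mul_le_mul_left _ ((card_le_card hGC).trans card_biUnion_le)
    _ = ∑ p ∈ P, #P * #(C p) := mul_sum _ _ _

section TensorCount

open scoped Classical

variable {n₁ n₂ : ℕ} (U : Submodule (ZMod 2) (Fin n₁ → ZMod 2))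
  (V : (Fin n₁ → ZMod 2) → Submodule (ZMod 2) (Fin n₂ → ZMod 2))

theorem qCount_eq_sum (p : (Fin n₁ → ZMod 2) → (Fin n₂ → ZMod 2) → Prop) :
    qCount n₁ n₂ U V p = ∑ u with u ∈ U, #{v | v ∈ V u ∧ p u v} := by
  rw [qCount, Set.ncard_eq_toFinset_card', Set.toFinset_ofPred, card_filter,
    Fintype.sum_prod_type, sum_filter]
  refine sum_congr rfl fun u _ => ?_
  by_cases hu : u ∈ U <;> simp [hu]

theorem matDot_vecMulVec (r : Matrix (Fin n₁) (Fin n₂) (ZMod 2)) (u : Fin n₁ → ZMod 2)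
    (v : Fin n₂ → ZMod 2) : matDot n₁ n₂ r (vecMulVec u v) = u ᵥ* r ⬝ᵥ v := by
  simp only [matDot, vecMulVec_apply, dotProduct, vecMul, sum_mul]
  rw [sum_comm]
  exact sum_congr rfl fun j _ => sum_congr rfl fun i _ => by ring


/-- The `u ∈ U` whose fibre `{u ⊗ v : v ∈ V u}` of `Q` is annihilated by `r`. -/
noncomputable def annihilatedFibers (r : Matrix (Fin n₁) (Fin n₂) (ZMod 2)) :
    Finset (Fin n₁ → ZMod 2) :=
  {u | u ∈ U ∧ ∀ v ∈ V u, u ᵥ* r ⬝ᵥ v = 0}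

variable {U V}

theorem mem_annihilatedFibers {r : Matrix (Fin n₁) (Fin n₂) (ZMod 2)} {u : Fin n₁ → ZMod 2} :
    u ∈ annihilatedFibers U V r ↔ u ∈ U ∧ ∀ v ∈ V u, u ᵥ* r ⬝ᵥ v = 0 := by
  simp [annihilatedFibers]

theorem annihilatedFibers_subset (r : Matrix (Fin n₁) (Fin n₂) (ZMod 2)) :
    annihilatedFibers U V r ⊆ ({u | u ∈ U} : Finset _) := fun _ hu => by
  simpa using (mem_annihilatedFibers.mp hu).1

theorem two_mul_qCount_le (r : Matrix (Fin n₁) (Fin n₂) (ZMod 2)) {N : ℕ}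
    (hN : ∀ u ∈ U, #{v | v ∈ V u} = N) :
    2 * qCount n₁ n₂ U V (fun u v => matDot n₁ n₂ r (vecMulVec u v) = 0) ≤
      N * (#{u | u ∈ U} + #(annihilatedFibers U V r)) := by
  have hfiber : ∀ u ∈ U, 2 * #{v | v ∈ V u ∧ u ᵥ* r ⬝ᵥ v = 0} ≤
      N + if ∀ v ∈ V u, u ᵥ* r ⬝ᵥ v = 0 then N else 0 := by
    intro u hu
    split_ifs with h
    · rw [← hN u hu, ← two_mul]
      exact Nat.mul_le_mul_left 2 (card_le_card fun v => by simp +contextual)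
    · push Not at h
      rw [two_mul_card_filter_dotProduct_eq_zero (V u) h, hN u hu, add_zero]
  rw [qCount_eq_sum, mul_sum]
  calc _ ≤ ∑ u with u ∈ U, (N + if ∀ v ∈ V u, u ᵥ* r ⬝ᵥ v = 0 then N else 0) :=
        sum_le_sum fun u hu => by
          simpa only [matDot_vecMulVec] using hfiber u (mem_filter.mp hu).2
    _ = N * (#{u | u ∈ U} + #(annihilatedFibers U V r)) := by
        rw [sum_add_distrib, ← sum_filter, filter_filter, sum_const, sum_const, smul_eq_mul,
          smul_eq_mul, mul_add, mul_comm, mul_comm _ N]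
        rfl

theorem card_le_two_mul_card_annihilatedFibers (r : Matrix (Fin n₁) (Fin n₂) (ZMod 2)) {N : ℕ}
    (hN : ∀ u ∈ U, #{v | v ∈ V u} = N)
    (hr : (3 / 4 : ℝ) * qCount n₁ n₂ U V (fun _ _ => True) ≤
      (qCount n₁ n₂ U V (fun u v => matDot n₁ n₂ r (vecMulVec u v) = 0) : ℝ)) :
    #{u | u ∈ U} ≤ 2 * #(annihilatedFibers U V r) := by
  have hN₀ : 0 < N := hN 0 U.zero_mem ▸ card_pos.mpr ⟨0, by simp⟩
  have htotal : qCount n₁ n₂ U V (fun _ _ => True) = N * #{u | u ∈ U} := by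
    rw [qCount_eq_sum, sum_congr rfl fun u hu => by simpa using hN u (mem_filter.mp hu).2,
      sum_const, smul_eq_mul, mul_comm]
  have hle := two_mul_qCount_le r hN
  rw [htotal] at hr
  have hreal : (N : ℝ) * #{u | u ∈ U} ≤ N * (2 * #(annihilatedFibers U V r)) := by
    have : (2 : ℝ) * qCount n₁ n₂ U V (fun u v => matDot n₁ n₂ r (vecMulVec u v) = 0) ≤
        N * (#{u | u ∈ U} + #(annihilatedFibers U V r)) := by exact_mod_cast hle
    push_cast at hr
    linarith
  exact_mod_cast le_of_mul_le_mul_left hreal (by exact_mod_cast hN₀)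

theorem three_mul_card_le_eight_mul_card_filter_lt {k N : ℕ}
    (hN : ∀ u ∈ U, #{v | v ∈ V u} = N) (r : Fin (2 ^ (k + 3)) → Matrix (Fin n₁) (Fin n₂) (ZMod 2))
    (hr : ∀ i, (3 / 4 : ℝ) * qCount n₁ n₂ U V (fun _ _ => True) ≤
      (qCount n₁ n₂ U V (fun u v => matDot n₁ n₂ (r i) (vecMulVec u v) = 0) : ℝ)) :
    3 * #{u | u ∈ U} ≤
      8 * #{u ∈ ({u | u ∈ U} : Finset _) | 2 ^ k < #{i | u ∈ annihilatedFibers U V (r i)}} := by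
  have h := card_mul_card_le_two_mul_card_filter_lt _ _
    (fun i => annihilatedFibers_subset (r i))
    (fun i => card_le_two_mul_card_annihilatedFibers (r i) hN (hr i)) (2 ^ k)
  generalize #{u ∈ ({u | u ∈ U} : Finset _) | 2 ^ k < #{i | u ∈ annihilatedFibers U V (r i)}} = g
    at h ⊢
  rw [Fintype.card_fin, pow_add] at h
  refine Nat.le_of_mul_le_mul_left (c := 2 ^ k) ?_ (Nat.two_pow_pos k)
  linarith

end TensorCount

open scoped Classical in
theorem exists_ne_two_pow_le_mul_ncard_vecMul_sub_eq_zero (k n₁ n₂ : ℕ)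
    (U : Submodule (ZMod 2) (Fin n₁ → ZMod 2)) (hU : n₁ - finrank (ZMod 2) U ≤ k)
    (V : (Fin n₁ → ZMod 2) → Submodule (ZMod 2) (Fin n₂ → ZMod 2))
    (hV : ∀ u ∈ U, n₂ - finrank (ZMod 2) (V u) ≤ k)
    (hVeq : ∀ u ∈ U, ∀ u' ∈ U, finrank (ZMod 2) (V u) = finrank (ZMod 2) (V u'))
    (r : Fin (2 ^ (k + 3)) → Matrix (Fin n₁) (Fin n₂) (ZMod 2))
    (hr : ∀ i, (3 / 4 : ℝ) * qCount n₁ n₂ U V (fun _ _ => True) ≤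
      (qCount n₁ n₂ U V (fun u v => matDot n₁ n₂ (r i) (vecMulVec u v) = 0) : ℝ)) :
    ∃ i j, i ≠ j ∧ 2 ^ n₁ ≤ 2 ^ (3 * k + 9) * {w | w ᵥ* (r i - r j) = 0}.ncard := by
  set S : Finset (Fin n₁ → ZMod 2) := {u | u ∈ U}
  set G := {u ∈ S | 2 ^ k < #{i | u ∈ annihilatedFibers U V (r i)}}
  have hS : 2 ^ n₁ ≤ 2 ^ k * #S := by
    rw [card_filter_mem_submodule, ZMod.card, ← pow_add]
    exact Nat.pow_le_pow_right two_pos (by omega)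
  have hG : 3 * #S ≤ 8 * #G := three_mul_card_le_eight_mul_card_filter_lt
    (fun u hu => by rw [card_filter_mem_submodule, ZMod.card, hVeq u hu 0 U.zero_mem]) r hr
  have hGK : G ⊆ univ.offDiag.biUnion fun p => {w | w ᵥ* (r p.1 - r p.2) = 0} := by
    intro u hu
    obtain ⟨huS, hlt⟩ := mem_filter.mp hu
    obtain ⟨i, j, hij, hker⟩ := exists_ne_vecMul_sub_eq_zero (V u)
      (by simpa using hV u (by simpa [S] using huS)) u r _ (by rwa [ZMod.card])
      fun i hi => (mem_annihilatedFibers.mp (mem_filter.mp hi).2).2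
    exact mem_biUnion.mpr ⟨(i, j), by simpa using hij, by simpa using hker⟩
  have hG₀ : G.Nonempty := by
    rw [← card_pos]
    have : 0 < #S := card_pos.mpr ⟨0, by simp [S]⟩
    omega
  obtain ⟨p, hp, hGp⟩ := exists_card_le_mul_card_of_subset_biUnion hG₀ _ hGK
  have hoff : #(univ.offDiag : Finset (Fin (2 ^ (k + 3)) × _)) ≤ 2 ^ (2 * k + 6) := by
    rw [offDiag_card, card_univ, Fintype.card_fin]
    exact (Nat.sub_le _ _).trans_eq (by ring)
  refine ⟨p.1, p.2, (mem_offDiag.mp hp).2.2, ?_⟩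
  rw [Set.ncard_eq_toFinset_card', Set.toFinset_ofPred]
  calc 2 ^ n₁ ≤ 2 ^ k * #S := hS
    _ ≤ 2 ^ k * (8 * #G) := by gcongr; omega
    _ ≤ 2 ^ k * (8 * (2 ^ (2 * k + 6) * #{w | w ᵥ* (r p.1 - r p.2) = 0})) := by
        gcongr; exact hGp.trans (Nat.mul_le_mul_right _ hoff)
    _ = 2 ^ (3 * k + 9) * #{w | w ᵥ* (r p.1 - r p.2) = 0} := by ring

theorem stmt10_general (k : ℕ) :
    ∃ ρ : ℝ, 0 < ρ ∧ ∃ L : ℕ, 0 < L ∧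
      ∀ n₁ n₂ : ℕ, 0 < n₁ → 0 < n₂ →
        ∀ U : Submodule (ZMod 2) (Fin n₁ → ZMod 2), n₁ - Module.finrank (ZMod 2) U ≤ k →
          ∀ V : (Fin n₁ → ZMod 2) → Submodule (ZMod 2) (Fin n₂ → ZMod 2),
            (∀ u ∈ U, n₂ - Module.finrank (ZMod 2) (V u) ≤ k) →
            (∀ u ∈ U, ∀ u' ∈ U,
              Module.finrank (ZMod 2) (V u) = Module.finrank (ZMod 2) (V u')) →
            ∀ r : Fin (2 ^ (k + 3)) → Matrix (Fin n₁) (Fin n₂) (ZMod 2),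
              (∀ i, (3 / 4 : ℝ) * qCount n₁ n₂ U V (fun _ _ => True) ≤
                (qCount n₁ n₂ U V
                  (fun u v => matDot n₁ n₂ (r i) (Matrix.vecMulVec u v) = 0) : ℝ)) →
              ∃ i j, i ≠ j ∧
                ρ * 2 ^ n₁ ≤
                  (Set.ncard {w : Fin n₁ → ZMod 2 |
                    Matrix.vecMul w (r i - r j) = 0} : ℝ) ∧
                (r i - r j).rank ≤ L := by
  refine ⟨(2 ^ (3 * k + 9))⁻¹, by positivity, 3 * k + 9, by omega, ?_⟩
  intro n₁ n₂ _ _ U hU V hV hVeq r hr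
  obtain ⟨i, j, hij, hcard⟩ :=
    exists_ne_two_pow_le_mul_ncard_vecMul_sub_eq_zero k n₁ n₂ U hU V hV hVeq r hr
  refine ⟨i, j, hij, ?_, rank_le_of_pow_card_le_mul_ncard _ ?_⟩
  · rw [inv_mul_le_iff₀ (by positivity)]
    exact_mod_cast hcard
  · simpa [ZMod.card] using hcard

theorem stmt10 (k : ℕ) (hk : 0 < k) :
    ∃ ρ : ℝ, 0 < ρ ∧ ∃ L : ℕ, 0 < L ∧
      ∀ n₁ n₂ : ℕ, 0 < n₁ → 0 < n₂ →
        ∀ U : Submodule (ZMod 2) (Fin n₁ → ZMod 2), n₁ - Module.finrank (ZMod 2) U ≤ k →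
          ∀ V : (Fin n₁ → ZMod 2) → Submodule (ZMod 2) (Fin n₂ → ZMod 2),
            (∀ u ∈ U, n₂ - Module.finrank (ZMod 2) (V u) ≤ k) →
            (∀ u ∈ U, ∀ u' ∈ U,
              Module.finrank (ZMod 2) (V u) = Module.finrank (ZMod 2) (V u')) →
            ∀ r : Fin (2 ^ (k + 3)) → Matrix (Fin n₁) (Fin n₂) (ZMod 2),
              (∀ i, (3 / 4 : ℝ) * qCount n₁ n₂ U V (fun _ _ => True) ≤
                (qCount n₁ n₂ U V
                  (fun u v => matDot n₁ n₂ (r i) (Matrix.vecMulVec u v) = 0) : ℝ)) →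
              ∃ i j, i ≠ j ∧
                ρ * 2 ^ n₁ ≤
                  (Set.ncard {w : Fin n₁ → ZMod 2 |
                    Matrix.vecMul w (r i - r j) = 0} : ℝ) ∧
                (r i - r j).rank ≤ L :=
  stmt10_general k
end

section
/- There exists an absolute constant ε' > 0 such that for all positive integers k and l there exists a positive integer K with the following property. Let n_1, n_2 be positive integers, let U ⊆ F_2^{n_1} be a subspace of codimension at most k, and for each u ∈ U let V_u ⊆ F_2^{n_2} be a subspace of codimension at most k, with all the V_u having the same codimension. Let Q be the multiset of matrices u⊗v indexed by pairs (u,v) with u ∈ U and v ∈ V_u. Then there exist subspaces W_1 ⊆ F_2^{n_1} and W_2 ⊆ F_2^{n_2}, each of dimension at most K, such that every matrix r ∈ 𝒢 of rank at most l satisfying r·(u⊗v) = 0 for at least (1−ε')|Q| of the pairs (u,v) with u ∈ U, v ∈ V_u lies in W_1⊗F_2^{n_2} + F_2^{n_1}⊗W_2. -/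
/-!
Take `ε' = 1/32`. Call `u ∈ U` good for `r` if `uᵀ r` is orthogonal to `V_u`; for a bad `u`
at most half of the `v ∈ V_u` satisfy `r · (u ⊗ v) = 0`, so the hypothesis makes `15/16` of
`U` good. Call `w` popular if `w ⊥ V_u` for at least a `2^-(l+2)` fraction of `u ∈ U`; since
each `V_u^⊥` has at most `2^k` elements, double counting leaves at most `2^(k+l+2)` popular
vectors, whatever `r` is. As `uᵀ r` takes at most `2^l` values, fewer than a quarter of the
`u` are good with `uᵀ r` unpopular, so more than half of `U` is good with `uᵀ r` popular, and
every `x ∈ U` is a difference of two such `u`. Hence `xᵀ r ∈ W₂ := span (popular)` for all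
`x ∈ U`, and splitting `r` along a projection onto `U` puts it in
`U^⊥ ⊗ F₂^{n₂} + F₂^{n₁} ⊗ W₂`, with `dim U^⊥ ≤ k`.
-/

open Finset Module Matrix

namespace TensorTest

section DotOrthogonal

variable {K ι : Type*} [Field K] [Fintype ι]

abbrev dotOrthogonal (W : Submodule K (ι → K)) : Submodule K (ι → K) :=
  LinearMap.BilinForm.orthogonal (dotProductBilin K K) W

lemma mem_dotOrthogonal {W : Submodule K (ι → K)} {w : ι → K} :
    w ∈ dotOrthogonal W ↔ ∀ v ∈ W, v ⬝ᵥ w = 0 := Iff.rfl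

lemma dotProductBilin_nondegenerate [DecidableEq ι] :
    LinearMap.BilinForm.Nondegenerate (dotProductBilin K K : LinearMap.BilinForm K (ι → K)) :=
  ⟨fun w hw => funext fun i => by simpa using hw (Pi.single i 1),
    fun w hw => funext fun i => by simpa using hw (Pi.single i 1)⟩

lemma finrank_dotOrthogonal [DecidableEq ι] (W : Submodule K (ι → K)) :
    finrank K (dotOrthogonal W) = Fintype.card ι - finrank K W := by
  rw [LinearMap.BilinForm.finrank_orthogonal dotProductBilin_nondegenerate,
    finrank_fintype_fun_eq_card]

end DotOrthogonal

lemma card_filter_mem_submodule {K M : Type*} [Field K] [Fintype K] [AddCommGroup M]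
    [Module K M] [Fintype M] (W : Submodule K M) [DecidablePred (· ∈ W)] :
    #{v | v ∈ W} = Fintype.card K ^ finrank K W := by
  rw [← card_eq_pow_finrank, ← Fintype.card_subtype]

lemma two_mul_card_filter_eq_zero_le {G H : Type*} [AddGroup G] [Fintype G]
    [AddGroup H] [DecidableEq H] (V : AddSubgroup G) [DecidablePred (· ∈ V)] (f : G →+ H)
    {v₀ : G} (hv₀ : v₀ ∈ V) (hf : f v₀ ≠ 0) :
    2 * #{v | v ∈ V ∧ f v = 0} ≤ #{v | v ∈ V} := by
  have hzeros : #{v | v ∈ V ∧ f v = 0} ≤ #{v | v ∈ V ∧ ¬f v = 0} := by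
    refine card_le_card_of_injOn (· + v₀) (fun v hv => ?_) (add_left_injective v₀).injOn
    simp only [coe_filter, Set.mem_ofPred_eq, mem_univ, true_and] at hv ⊢
    exact ⟨V.add_mem hv.1 hv₀, by rwa [map_add, hv.2, zero_add]⟩
  have hsplit := card_filter_add_card_filter_not (s := ({v | v ∈ V} : Finset G))
    (fun v => f v = 0)
  simp only [filter_filter] at hsplit
  omega

lemma two_mul_card_filter_dotProduct_eq_zero_le {K ι : Type*} [Field K] [Fintype K]
    [DecidableEq K] [Fintype ι] [DecidableEq ι] (W : Submodule K (ι → K))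
    [DecidablePred (· ∈ W)] [DecidablePred (· ∈ dotOrthogonal W)] (w : ι → K) :
    2 * #{v | v ∈ W ∧ w ⬝ᵥ v = 0} ≤
      #{v | v ∈ W} + if w ∈ dotOrthogonal W then #{v | v ∈ W} else 0 := by
  split_ifs with hw
  · have : #{v | v ∈ W ∧ w ⬝ᵥ v = 0} ≤ #{v | v ∈ W} :=
      card_le_card fun v hv => by simp_all
    omega
  · obtain ⟨v₀, hv₀, hne⟩ : ∃ v₀ ∈ W, w ⬝ᵥ v₀ ≠ 0 := by
      simpa [mem_dotOrthogonal, dotProduct_comm] using hw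
    have := two_mul_card_filter_eq_zero_le W.toAddSubgroup
      (dotProductBilin K K w).toAddMonoidHom hv₀ hne
    simpa using this

section Popular

variable {ι α : Type*} [Fintype α] [DecidableEq α]
  (I : Finset ι) (s : ι → Finset α) (t : ℕ)

def popular : Finset α := {a | #I ≤ #{i ∈ I | a ∈ s i} * t}

variable {I s t}

lemma card_popular_le {c : ℕ} (hI : I.Nonempty) (hs : ∀ i ∈ I, #(s i) ≤ c) :
    #(popular I s t) ≤ c * t := by
  have hdouble : #(popular I s t) * #I ≤ #I * c * t :=
    calc #(popular I s t) * #I ≤ ∑ a ∈ popular I s t, #{i ∈ I | a ∈ s i} * t := by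
          rw [← smul_eq_mul, ← sum_const]
          exact sum_le_sum fun a ha => (mem_filter.mp ha).2
      _ ≤ (∑ a, #{i ∈ I | a ∈ s i}) * t := by
          rw [← sum_mul]
          exact Nat.mul_le_mul_right _ (sum_le_sum_of_subset (subset_univ _))
      _ = (∑ i ∈ I, #(s i)) * t := by
          simp only [card_filter]
          rw [sum_comm]
          simp
      _ ≤ #I * c * t := by
          refine Nat.mul_le_mul_right _ ?_
          rw [← smul_eq_mul, ← sum_const]
          exact sum_le_sum hs
  rw [mul_assoc, mul_comm (#I)] at hdouble
  exact Nat.le_of_mul_le_mul_right hdouble hI.card_pos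

lemma card_filter_notMem_popular_mul_le (g : ι → α) :
    #{i ∈ I | g i ∈ s i ∧ g i ∉ popular I s t} * t ≤ #(I.image g) * #I := by
  set T := (I.image g).filter (· ∉ popular I s t)
  have hfibers : #{i ∈ I | g i ∈ s i ∧ g i ∉ popular I s t} ≤
      ∑ a ∈ T, #{i ∈ I | a ∈ s i} := by
    rw [card_eq_sum_card_fiberwise (f := g) (t := T) fun i hi => by
      simp only [coe_filter, Set.mem_ofPred_eq] at hi
      exact mem_filter.mpr ⟨mem_image_of_mem g hi.1, hi.2.2⟩]
    refine sum_le_sum fun a _ => card_le_card fun i hi => ?_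
    simp only [mem_filter] at hi ⊢
    exact ⟨hi.1.1, hi.2 ▸ hi.1.2.1⟩
  calc #{i ∈ I | g i ∈ s i ∧ g i ∉ popular I s t} * t
      ≤ ∑ a ∈ T, #{i ∈ I | a ∈ s i} * t := by
        rw [← sum_mul]; exact Nat.mul_le_mul_right _ hfibers
    _ ≤ #T * #I := by
        rw [← smul_eq_mul, ← sum_const]
        refine sum_le_sum fun a ha => ?_
        have := (mem_filter.mp ha).2
        simp only [popular, mem_filter, mem_univ, true_and, not_le] at this
        exact this.le
    _ ≤ #(I.image g) * #I := Nat.mul_le_mul_right _ (card_filter_le _ _)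

lemma card_lt_two_mul_card_filter_mem_popular (g : ι → α) (hI : I.Nonempty)
    (hgood : 15 * #I ≤ 16 * #{i ∈ I | g i ∈ s i}) (himage : #(I.image g) * 4 ≤ t) :
    #I < 2 * #{i ∈ I | g i ∈ s i ∧ g i ∈ popular I s t} := by
  have hbad : #{i ∈ I | g i ∈ s i ∧ g i ∉ popular I s t} * 4 ≤ #I := by
    have h := card_filter_notMem_popular_mul_le (I := I) (s := s) (t := t) g
    refine Nat.le_of_mul_le_mul_right (c := #(I.image g)) ?_ (hI.image g).card_pos
    nlinarith
  have hsplit := card_filter_add_card_filter_not (s := {i ∈ I | g i ∈ s i})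
    (fun i => g i ∈ popular I s t)
  simp only [filter_filter] at hsplit
  have := hI.card_pos
  omega

end Popular

lemma exists_sub_eq_of_card_lt {G : Type*} [AddGroup G] [DecidableEq G] {A S : Finset G}
    (hSA : S ⊆ A) {x : G} (hx : ∀ s ∈ S, x + s ∈ A) (hcard : #A < 2 * #S) :
    ∃ y ∈ S, ∃ s ∈ S, y - s = x := by
  have hnd : ¬Disjoint S (S.image (x + ·)) := fun hdisj => by
    have hunion := card_le_card (union_subset hSA (image_subset_iff.mpr hx))
    rw [card_union_of_disjoint hdisj, card_image_of_injective _ (add_right_injective x)] at hunion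
    omega
  obtain ⟨y, hyS, hy⟩ := not_disjoint_iff.mp hnd
  obtain ⟨s, hs, rfl⟩ := mem_image.mp hy
  exact ⟨x + s, hyS, s, hs, add_sub_cancel_right x s⟩

variable {n₁ n₂ : ℕ}

lemma matDot_vecMulVec (r : Matrix (Fin n₁) (Fin n₂) (ZMod 2)) (u : Fin n₁ → ZMod 2)
    (v : Fin n₂ → ZMod 2) : matDot n₁ n₂ r (vecMulVec u v) = u ᵥ* r ⬝ᵥ v := by
  simp only [matDot, vecMulVec_apply, dotProduct, vecMul, sum_mul]
  rw [sum_comm]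
  exact sum_congr rfl fun j _ => sum_congr rfl fun i _ => by ring

lemma card_image_vecMul_le (s : Finset (Fin n₁ → ZMod 2))
    (r : Matrix (Fin n₁) (Fin n₂) (ZMod 2)) :
    #(s.image (· ᵥ* r)) ≤ 2 ^ r.rank := by
  classical
  have hsub : s.image (· ᵥ* r) ⊆ ({w | w ∈ LinearMap.range r.vecMulLinear} : Finset _) := by
    intro w hw
    obtain ⟨u, -, rfl⟩ := mem_image.mp hw
    simp
  calc #(s.image (· ᵥ* r)) ≤ #{w | w ∈ LinearMap.range r.vecMulLinear} := card_le_card hsub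
    _ = 2 ^ r.rank := by
      rw [card_filter_mem_submodule, ZMod.card, range_vecMulLinear, rank_eq_finrank_span_row]

lemma mem_colCyl_sup_rowCyl (U : Submodule (ZMod 2) (Fin n₁ → ZMod 2))
    (W : Submodule (ZMod 2) (Fin n₂ → ZMod 2)) (r : Matrix (Fin n₁) (Fin n₂) (ZMod 2))
    (hr : ∀ x ∈ U, x ᵥ* r ∈ W) :
    r ∈ colCyl n₁ n₂ (dotOrthogonal U) ⊔ rowCyl n₁ n₂ W := by
  obtain ⟨π, hπ⟩ := U.subtype.exists_leftInverse_of_injective U.ker_subtype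
  -- `x ↦ x ᵥ* N` is a projection onto `U`; rows of `N * r` are then images of `U`,
  -- while `r - N * r` is annihilated on the left by `U`.
  set N := (LinearMap.toMatrix' (U.subtype ∘ₗ π))ᵀ
  have hN : ∀ x, x ᵥ* N = π x := fun x => by
    rw [vecMul_transpose, LinearMap.toMatrix'_mulVec]; rfl
  refine Submodule.mem_sup.mpr
    ⟨r - N * r, fun j => ?_, N * r, fun i => ?_, sub_add_cancel r _⟩
  · rw [mem_dotOrthogonal]
    intro u hu
    have hπu : π u = u := by
      simpa using congrArg Subtype.val (LinearMap.congr_fun hπ ⟨u, hu⟩)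
    change (u ᵥ* (r - N * r)) j = 0
    rw [vecMul_sub, ← vecMul_vecMul, hN, hπu, sub_self, Pi.zero_apply]
  · have hrow : (fun j => (N * r) i j) = (π (Pi.single i 1) : Fin n₁ → ZMod 2) ᵥ* r := by
      rw [← hN, vecMul_vecMul, single_one_vecMul]
      rfl
    rw [hrow]
    exact hr _ (π _).2

open scoped Classical in
noncomputable def popularDirections (U : Submodule (ZMod 2) (Fin n₁ → ZMod 2))
    (V : (Fin n₁ → ZMod 2) → Submodule (ZMod 2) (Fin n₂ → ZMod 2)) (l : ℕ) :
    Finset (Fin n₂ → ZMod 2) :=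
  popular {u | u ∈ U} (fun u => {w | w ∈ dotOrthogonal (V u)}) (2 ^ (l + 2))

section PopularDirections

open scoped Classical

variable {U : Submodule (ZMod 2) (Fin n₁ → ZMod 2)}
  {V : (Fin n₁ → ZMod 2) → Submodule (ZMod 2) (Fin n₂ → ZMod 2)}

lemma qCount_eq_sum (p : (Fin n₁ → ZMod 2) → (Fin n₂ → ZMod 2) → Prop)
    [DecidableRel p] :
    qCount n₁ n₂ U V p = ∑ u ∈ {u | u ∈ U}, #{v | v ∈ V u ∧ p u v} := by
  rw [qCount, Set.ncard_eq_toFinset_card', Set.toFinset_ofPred, card_filter,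
    Fintype.sum_prod_type, sum_filter]
  refine sum_congr rfl fun u _ => ?_
  split_ifs with hu
  · rw [card_filter]
    simp [hu]
  · simp [hu]

lemma card_popularDirections_le {k : ℕ} (hV : ∀ u ∈ U, n₂ - finrank (ZMod 2) (V u) ≤ k)
    (l : ℕ) : #(popularDirections U V l) ≤ 2 ^ (k + l + 2) := by
  rw [add_assoc, pow_add]
  refine card_popular_le ⟨0, by simp⟩ fun u hu => ?_
  rw [card_filter_mem_submodule, ZMod.card, finrank_dotOrthogonal, Fintype.card_fin]
  exact Nat.pow_le_pow_right two_pos (hV u (by simpa using hu))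

lemma card_vecMul_mem_dotOrthogonal_ge (r : Matrix (Fin n₁) (Fin n₂) (ZMod 2))
    (hVeq : ∀ u ∈ U, ∀ u' ∈ U, finrank (ZMod 2) (V u) = finrank (ZMod 2) (V u'))
    (hclose : 31 * qCount n₁ n₂ U V (fun _ _ => True) ≤
      32 * qCount n₁ n₂ U V (fun u v => matDot n₁ n₂ r (vecMulVec u v) = 0)) :
    15 * #{u | u ∈ U} ≤
      16 * #{u ∈ {u | u ∈ U} | u ᵥ* r ∈ ({w | w ∈ dotOrthogonal (V u)} : Finset _)} := by
  set I : Finset (Fin n₁ → ZMod 2) := {u | u ∈ U}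
  set S := {u ∈ I | u ᵥ* r ∈ ({w | w ∈ dotOrthogonal (V u)} : Finset _)}
  set M := 2 ^ finrank (ZMod 2) (V 0)
  have hcardV : ∀ u ∈ I, #{v | v ∈ V u} = M := fun u hu => by
    rw [card_filter_mem_submodule, ZMod.card, hVeq u (by simpa [I] using hu) 0 U.zero_mem]
  have htotal : qCount n₁ n₂ U V (fun _ _ => True) = #I * M := by
    simp only [qCount_eq_sum, and_true]
    rw [sum_congr rfl hcardV, sum_const, smul_eq_mul]
  have hzeros : 2 * qCount n₁ n₂ U V (fun u v => matDot n₁ n₂ r (vecMulVec u v) = 0) ≤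
      #I * M + #S * M :=
    calc 2 * qCount n₁ n₂ U V (fun u v => matDot n₁ n₂ r (vecMulVec u v) = 0)
        = ∑ u ∈ I, 2 * #{v | v ∈ V u ∧ u ᵥ* r ⬝ᵥ v = 0} := by
          simp only [qCount_eq_sum, matDot_vecMulVec, mul_sum, I]
      _ ≤ ∑ u ∈ I, (M + if u ∈ S then M else 0) := by
          refine sum_le_sum fun u hu => ?_
          have := two_mul_card_filter_dotProduct_eq_zero_le (V u) (u ᵥ* r)
          simpa [S, hu, hcardV u hu] using this
      _ = #I * M + #S * M := by
          rw [sum_add_distrib, sum_ite_mem, inter_eq_right.mpr (filter_subset _ _), sum_const,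
            sum_const, smul_eq_mul, smul_eq_mul]
  have hM : 0 < M := by positivity
  have : 31 * #I * M ≤ 16 * (#I + #S) * M := by nlinarith
  have := Nat.le_of_mul_le_mul_right this hM
  omega

lemma vecMul_mem_span_popularDirections {l : ℕ} {r : Matrix (Fin n₁) (Fin n₂) (ZMod 2)}
    (hVeq : ∀ u ∈ U, ∀ u' ∈ U, finrank (ZMod 2) (V u) = finrank (ZMod 2) (V u'))
    (hrank : r.rank ≤ l)
    (hclose : 31 * qCount n₁ n₂ U V (fun _ _ => True) ≤
      32 * qCount n₁ n₂ U V (fun u v => matDot n₁ n₂ r (vecMulVec u v) = 0))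
    {x : Fin n₁ → ZMod 2} (hx : x ∈ U) :
    x ᵥ* r ∈ Submodule.span (ZMod 2) (popularDirections U V l : Set (Fin n₂ → ZMod 2)) := by
  set I : Finset (Fin n₁ → ZMod 2) := {u | u ∈ U}
  have himage : #(I.image (· ᵥ* r)) * 4 ≤ 2 ^ (l + 2) := by
    rw [pow_add]
    exact Nat.mul_le_mul_right _
      ((card_image_vecMul_le I r).trans (Nat.pow_le_pow_right two_pos hrank))
  have hlarge := card_lt_two_mul_card_filter_mem_popular (· ᵥ* r) ⟨0, by simp⟩
    (card_vecMul_mem_dotOrthogonal_ge r hVeq hclose) himage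
  obtain ⟨y, hy, s, hs, rfl⟩ := exists_sub_eq_of_card_lt (filter_subset _ I) (x := x)
    (fun s hs => by simpa [I] using U.add_mem hx (mem_filter.mp (mem_filter.mp hs).1).2)
    hlarge
  rw [sub_vecMul]
  exact Submodule.sub_mem _ (Submodule.subset_span (mem_filter.mp hy).2.2)
    (Submodule.subset_span (mem_filter.mp hs).2.2)

end PopularDirections

end TensorTest

open TensorTest

theorem stmt11 :
    ∃ ε' : ℝ, 0 < ε' ∧ ∀ k l : ℕ, 0 < k → 0 < l → ∃ K : ℕ, 0 < K ∧
      ∀ n₁ n₂ : ℕ, 0 < n₁ → 0 < n₂ →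
        ∀ U : Submodule (ZMod 2) (Fin n₁ → ZMod 2), n₁ - Module.finrank (ZMod 2) U ≤ k →
          ∀ V : (Fin n₁ → ZMod 2) → Submodule (ZMod 2) (Fin n₂ → ZMod 2),
            (∀ u ∈ U, n₂ - Module.finrank (ZMod 2) (V u) ≤ k) →
            (∀ u ∈ U, ∀ u' ∈ U,
              Module.finrank (ZMod 2) (V u) = Module.finrank (ZMod 2) (V u')) →
            ∃ W₁ : Submodule (ZMod 2) (Fin n₁ → ZMod 2),
              ∃ W₂ : Submodule (ZMod 2) (Fin n₂ → ZMod 2),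
                Module.finrank (ZMod 2) W₁ ≤ K ∧ Module.finrank (ZMod 2) W₂ ≤ K ∧
                ∀ r : Matrix (Fin n₁) (Fin n₂) (ZMod 2), r.rank ≤ l →
                  ((1 - ε') * qCount n₁ n₂ U V (fun _ _ => True) ≤
                    (qCount n₁ n₂ U V
                      (fun u v => matDot n₁ n₂ r (Matrix.vecMulVec u v) = 0) : ℝ)) →
                  r ∈ colCyl n₁ n₂ W₁ ⊔ rowCyl n₁ n₂ W₂ := by
  refine ⟨1 / 32, by norm_num, fun k l _ _ => ⟨2 ^ (k + l + 2), by positivity, ?_⟩⟩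
  intro n₁ n₂ _ _ U hU V hV hVeq
  refine ⟨dotOrthogonal U, Submodule.span (ZMod 2) (popularDirections U V l), ?_, ?_,
    fun r hr hclose => mem_colCyl_sup_rowCyl U _ r fun x hx => ?_⟩
  · rw [finrank_dotOrthogonal, Fintype.card_fin]
    exact hU.trans (Nat.lt_two_pow_self.trans_le (Nat.pow_le_pow_right two_pos (by omega))).le
  · exact (finrank_span_finset_le_card _).trans (card_popularDirections_le hV l)
  · refine vecMul_mem_span_popularDirections hVeq hr ?_ hx
    exact_mod_cast (by linarith : (31 : ℝ) * qCount n₁ n₂ U V (fun _ _ => True) ≤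
      32 * qCount n₁ n₂ U V (fun u v => matDot n₁ n₂ r (vecMulVec u v) = 0))
end

section
/- For every positive integer d and every δ > 0 there exist a nonnegative integer l (depending on d and δ) and a positive integer c (depending only on d) with the following property: for all positive integers n_1,…,n_d and every subset ℬ' ⊆ F_2^{n_1}×⋯×F_2^{n_d} with |ℬ'| ≥ δ·2^{n_1+⋯+n_d}, there exists an l-system Q ⊆ F_2^{n_1}×⋯×F_2^{n_d} such that for every tuple (u_1,…,u_d) ∈ Q, the array u_1⊗⋯⊗u_d is a sum of at most c arrays v_1⊗⋯⊗v_d with (v_1,…,v_d) ∈ ℬ'. -/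
open Finset

/-- The space of `d`-tuples `(u_1, …, u_d)` with `u_i ∈ F_2^{n_i}`. -/
abbrev Tup (d : ℕ) (n : Fin d → ℕ) := (i : Fin d) → (Fin (n i) → ZMod 2)

/-- `Q` is an `l`-system: there is a choice function `S`, assigning to each index `j` and
each tuple `u` a subspace `S j u ⊆ F_2^{n_j}` of codimension at most `l` that depends only
on the coordinates `u_1, …, u_{j-1}`, such that `Q` is the set of tuples `u` with
`u_j ∈ S j u` for every `j`. -/
def IsSystem (d : ℕ) (n : Fin d → ℕ) (l : ℕ) (Q : Set (Tup d n)) : Prop :=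
  ∃ S : (j : Fin d) → Tup d n → Submodule (ZMod 2) (Fin (n j) → ZMod 2),
    (∀ j : Fin d, ∀ u u' : Tup d n, (∀ i : Fin d, i < j → u i = u' i) → S j u = S j u') ∧
    (∀ j : Fin d, ∀ u : Tup d n, n j - Module.finrank (ZMod 2) (S j u) ≤ l) ∧
    Q = {u : Tup d n | ∀ j : Fin d, u j ∈ S j u}

/-- `𝒢 = F_2^{n_1} ⊗ ⋯ ⊗ F_2^{n_d}`, realized as `d`-dimensional arrays. -/
abbrev Arr (d : ℕ) (n : Fin d → ℕ) := ((i : Fin d) → Fin (n i)) → ZMod 2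

/-- The rank-one tensor `u_1 ⊗ ⋯ ⊗ u_d`. -/
def tensorOf (d : ℕ) (n : Fin d → ℕ) (u : Tup d n) : Arr d n :=
  fun x => ∏ i, u i (x i)

/-- The set `cℬ'`: elements of `𝒢` expressible as a sum of at most `c` rank-one tensors
with tuples from `B'`. -/
def sumAtMost (d : ℕ) (n : Fin d → ℕ) (c : ℕ) (B' : Finset (Tup d n)) : Set (Arr d n) :=
  {x | ∃ s : Multiset (Tup d n), Multiset.card s ≤ c ∧ (∀ u ∈ s, u ∈ B') ∧
    x = (s.map (tensorOf d n)).sum}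

/-!
Over `𝔽₂` Bogolyubov's lemma holds with subspaces: if `A ⊆ 𝔽₂^m` has density `δ`, then
`A + A + A + A` contains the annihilator of the large spectrum of `A`, a subspace of codimension
at most `2 / δ²` by Parseval (Fourier analysis with the `±1`-valued Walsh characters).

The theorem follows by induction on `d`, with `c = 4 ^ d`. The first coordinates `y` whose fibre
`B_y ⊆ 𝔽₂^{n₂} × ⋯ × 𝔽₂^{n_d}` has density at least `δ / 2` form a set `A` of density at least
`δ / 2`. For `u₁` in the Bogolyubov subspace of `A` write `u₁ = a₁ + a₂ + a₃ + a₄` with dense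
fibres `B_{aₖ}`, let `(u₂, …, u_d)` range over the intersection of the four systems given by
induction for these fibres, and expand `u₁ ⊗ w = ∑ₖ aₖ ⊗ w`.
-/

open Module

noncomputable section

lemma zmod_two_eq_zero_or_one (a : ZMod 2) : a = 0 ∨ a = 1 := by decide +revert

namespace BooleanFourier

variable {m : ℕ}

def signChar : AddChar (ZMod 2) ℝ where
  toFun a := if a = 0 then 1 else -1
  map_zero_eq_one' := if_pos rfl
  map_add_eq_mul' a b := by
    rcases zmod_two_eq_zero_or_one a with rfl | rfl <;>
      rcases zmod_two_eq_zero_or_one b with rfl | rfl <;> simp [show (1 : ZMod 2) + 1 = 0 from rfl]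

lemma signChar_apply (a : ZMod 2) : signChar a = if a = 0 then 1 else -1 := rfl

lemma neg_one_le_signChar (a : ZMod 2) : -1 ≤ signChar a := by
  rw [signChar_apply]; split_ifs <;> norm_num

def walsh (t : Fin m → ZMod 2) : AddChar (Fin m → ZMod 2) ℝ where
  toFun x := signChar (t ⬝ᵥ x)
  map_zero_eq_one' := by simp
  map_add_eq_mul' x y := by rw [dotProduct_add, AddChar.map_add_eq_mul]

lemma walsh_apply (t x : Fin m → ZMod 2) : walsh t x = signChar (t ⬝ᵥ x) := rfl

lemma walsh_comm (t x : Fin m → ZMod 2) : walsh t x = walsh x t := by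
  rw [walsh_apply, walsh_apply, dotProduct_comm]

lemma neg_one_le_walsh (t x : Fin m → ZMod 2) : -1 ≤ walsh t x := neg_one_le_signChar _

lemma walsh_eq_zero_iff {t : Fin m → ZMod 2} : walsh t = 0 ↔ t = 0 := by
  refine ⟨fun h => funext fun i => ?_, fun h => by ext x; simp [h, walsh_apply]⟩
  have hi := DFunLike.congr_fun h (Pi.single i 1)
  rw [walsh_apply, dotProduct_single, mul_one, AddChar.zero_apply, signChar_apply] at hi
  rcases zmod_two_eq_zero_or_one (t i) with h | h
  · exact h
  · norm_num [h] at hi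

lemma walsh_sum {ι : Type*} (t : Fin m → ZMod 2) (s : Finset ι) (a : ι → Fin m → ZMod 2) :
    walsh t (∑ i ∈ s, a i) = ∏ i ∈ s, walsh t (a i) := by
  induction s using Finset.cons_induction with
  | empty => simp
  | cons i s hi ih => rw [sum_cons, prod_cons, AddChar.map_add_eq_mul, ih]

lemma sum_walsh_mul_walsh (x y : Fin m → ZMod 2) :
    ∑ t, walsh t x * walsh t y = if x = y then 2 ^ m else 0 := by
  classical
  simp_rw [← AddChar.map_add_eq_mul, walsh_comm _ (x + y)]
  have hneg : -y = y := funext fun i => ZMod.neg_eq_self_mod_two (y i)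
  simp [AddChar.sum_eq_ite, walsh_eq_zero_iff, add_eq_zero_iff_eq_neg, hneg]

def fourier (A : Finset (Fin m → ZMod 2)) (t : Fin m → ZMod 2) : ℝ := ∑ a ∈ A, walsh t a

variable (A : Finset (Fin m → ZMod 2))

lemma fourier_zero : fourier A 0 = #A := by
  simp [fourier, walsh_comm 0]

lemma sum_fourier_sq : ∑ t, fourier A t ^ 2 = 2 ^ m * #A := by
  simp_rw [fourier, sq, sum_mul_sum]
  rw [sum_comm]
  conv_lhs => enter [2, a]; rw [sum_comm]
  simp [sum_walsh_mul_walsh, mul_comm]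

lemma sum_fourier_pow_mul_walsh (k : ℕ) (x : Fin m → ZMod 2) :
    ∑ t, fourier A t ^ k * walsh t x =
      2 ^ m * #{a ∈ Fintype.piFinset fun _ : Fin k => A | ∑ i, a i = x} := by
  have hpow (t : Fin m → ZMod 2) : fourier A t ^ k =
      ∑ a ∈ Fintype.piFinset fun _ : Fin k => A, walsh t (∑ i, a i) := by
    simp_rw [walsh_sum, ← prod_univ_sum, fourier, prod_const, card_univ, Fintype.card_fin]
  simp_rw [hpow, sum_mul]
  rw [sum_comm]
  simp_rw [sum_walsh_mul_walsh, sum_ite, sum_const_zero, add_zero, sum_const, nsmul_eq_mul,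
    mul_comm]

def largeSpectrum : Finset (Fin m → ZMod 2) :=
  {t | (#A : ℝ) ^ 3 ≤ 2 * 2 ^ m * fourier A t ^ 2}

lemma card_le_two_pow : (#A : ℝ) ≤ 2 ^ m := by
  have h := card_le_univ A
  rw [Fintype.card_fun, ZMod.card, Fintype.card_fin] at h
  exact_mod_cast h

lemma zero_mem_largeSpectrum : 0 ∈ largeSpectrum A := by
  have := card_le_two_pow A
  simp only [largeSpectrum, mem_filter, mem_univ, true_and, fourier_zero]
  nlinarith [sq_nonneg (#A : ℝ)]

lemma card_largeSpectrum_mul_le :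
    (#(largeSpectrum A) : ℝ) * #A ^ 3 ≤ 2 * (2 ^ m) ^ 2 * #A := calc
  (#(largeSpectrum A) : ℝ) * #A ^ 3 = ∑ t ∈ largeSpectrum A, (#A : ℝ) ^ 3 := by
    rw [sum_const, nsmul_eq_mul]
  _ ≤ ∑ t ∈ largeSpectrum A, 2 * 2 ^ m * fourier A t ^ 2 :=
    sum_le_sum fun t ht => (mem_filter.1 ht).2
  _ ≤ ∑ t, 2 * 2 ^ m * fourier A t ^ 2 :=
    sum_le_sum_of_subset_of_nonneg (subset_univ _) fun t _ _ => by positivity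
  _ = 2 * (2 ^ m) ^ 2 * #A := by rw [← mul_sum, sum_fourier_sq]; ring

/-- Off the large spectrum `fourier A t ^ 4` is at most `#A ^ 3 / (2 * 2 ^ m)` times
`fourier A t ^ 2`, so by Parseval these terms cannot cancel more than half of `fourier A 0 ^ 4`. -/
lemma sum_fourier_pow_four_mul_walsh_pos (hA : A.Nonempty) {x : Fin m → ZMod 2}
    (hx : ∀ t ∈ largeSpectrum A, t ⬝ᵥ x = 0) : 0 < ∑ t, fourier A t ^ 4 * walsh t x := by
  set K := largeSpectrum A
  set α : ℝ := (A.card : ℝ)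
  have hα : 0 < α := by simp [α, hA.card_pos]
  have hlarge : α ^ 4 ≤ ∑ t ∈ K, fourier A t ^ 4 * walsh t x := calc
    α ^ 4 = fourier A 0 ^ 4 := by rw [fourier_zero]
    _ ≤ ∑ t ∈ K, fourier A t ^ 4 :=
      single_le_sum (f := fun t => fourier A t ^ 4) (fun t _ => by positivity)
        (zero_mem_largeSpectrum A)
    _ = ∑ t ∈ K, fourier A t ^ 4 * walsh t x :=
      sum_congr rfl fun t ht => by simp [walsh_apply, hx t ht]
  have hsmall :
      -(α ^ 3 * (2 ^ m * α)) ≤ 2 * 2 ^ m * ∑ t ∈ Kᶜ, fourier A t ^ 4 * walsh t x := calc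
    -(α ^ 3 * (2 ^ m * α)) = -(α ^ 3 * ∑ t, fourier A t ^ 2) := by rw [sum_fourier_sq]
    _ ≤ -(α ^ 3 * ∑ t ∈ Kᶜ, fourier A t ^ 2) := by
      gcongr
      exact subset_univ _
    _ ≤ ∑ t ∈ Kᶜ, 2 * 2 ^ m * (fourier A t ^ 4 * walsh t x) := by
      rw [mul_sum, ← sum_neg_distrib]
      refine sum_le_sum fun t ht => ?_
      have hsq : 2 * 2 ^ m * fourier A t ^ 2 < α ^ 3 := by simpa [K, largeSpectrum] using ht
      have hw := neg_one_le_walsh t x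
      nlinarith [sq_nonneg (fourier A t), pow_pos (two_pos (α := ℝ)) m,
        mul_le_mul_of_nonneg_left hw (by positivity : 0 ≤ fourier A t ^ 4)]
    _ = 2 * 2 ^ m * ∑ t ∈ Kᶜ, fourier A t ^ 4 * walsh t x := by rw [mul_sum]
  rw [← sum_add_sum_compl K]
  nlinarith [pow_pos (two_pos (α := ℝ)) m, pow_pos hα 4]

lemma card_largeSpectrum_le {δ : ℝ} (hδ : 0 < δ) (hA : δ * 2 ^ m ≤ #A) :
    (#(largeSpectrum A) : ℝ) ≤ 2 / δ ^ 2 := by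
  have hN : (0 : ℝ) < 2 ^ m := by positivity
  have hα : 0 < (#A : ℝ) := (mul_pos hδ hN).trans_le hA
  have hK : (#(largeSpectrum A) : ℝ) * #A ^ 2 ≤ 2 * (2 ^ m) ^ 2 :=
    le_of_mul_le_mul_right (by linarith [card_largeSpectrum_mul_le A]) hα
  have hKδ : (#(largeSpectrum A) : ℝ) * δ ^ 2 * (2 ^ m) ^ 2 ≤ 2 * (2 ^ m) ^ 2 := calc
    _ = (#(largeSpectrum A) : ℝ) * (δ * 2 ^ m) ^ 2 := by ring
    _ ≤ (#(largeSpectrum A) : ℝ) * #A ^ 2 := by gcongr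
    _ ≤ 2 * (2 ^ m) ^ 2 := hK
  rw [le_div_iff₀ (by positivity)]
  exact le_of_mul_le_mul_right hKδ (by positivity)

theorem exists_subspace_subset_sum_four {δ : ℝ} (hδ : 0 < δ) (hA : δ * 2 ^ m ≤ #A) :
    ∃ W : Submodule (ZMod 2) (Fin m → ZMod 2),
      finrank (ZMod 2) ((Fin m → ZMod 2) ⧸ W) ≤ ⌈2 / δ ^ 2⌉₊ ∧
      ∀ x ∈ W, ∃ a : Fin 4 → Fin m → ZMod 2, (∀ k, a k ∈ A) ∧ ∑ k, a k = x := by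
  let M : Matrix (largeSpectrum A) (Fin m) (ZMod 2) := Matrix.of fun t => t
  refine ⟨LinearMap.ker M.mulVecLin, ?_, fun x hx => ?_⟩
  · have hrank : finrank (ZMod 2) (_ ⧸ LinearMap.ker M.mulVecLin) ≤ #(largeSpectrum A) :=
      (LinearMap.quotKerEquivRange _).finrank_eq.trans_le
        ((Matrix.rank_le_card_height M).trans_eq (Fintype.card_coe _))
    exact hrank.trans (by exact_mod_cast (card_largeSpectrum_le A hδ hA).trans (Nat.le_ceil _))
  · have hA0 : A.Nonempty := by
      rw [← card_pos]; exact_mod_cast (by positivity : (0:ℝ) < δ * 2 ^ m).trans_le hA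
    have hpos := sum_fourier_pow_four_mul_walsh_pos A hA0 fun t ht => congr_fun hx ⟨t, ht⟩
    rw [sum_fourier_pow_mul_walsh] at hpos
    obtain ⟨a, ha⟩ := card_pos.1 (by exact_mod_cast pos_of_mul_pos_right hpos (by positivity))
    rw [mem_filter, Fintype.mem_piFinset] at ha
    exact ⟨a, ha⟩

end BooleanFourier

end

lemma finrank_quotient_iInf_le {K E ι : Type*} [Field K] [AddCommGroup E] [Module K E]
    [FiniteDimensional K E] [Fintype ι] (W : ι → Submodule K E) :
    finrank K (E ⧸ ⨅ i, W i) ≤ ∑ i, finrank K (E ⧸ W i) := by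
  let f : E →ₗ[K] (i : ι) → E ⧸ W i := LinearMap.pi fun i => (W i).mkQ
  have hker : LinearMap.ker f = ⨅ i, W i := by simp [f, LinearMap.ker_pi]
  rw [← hker, (LinearMap.quotKerEquivRange f).finrank_eq, ← finrank_pi_fintype]
  exact Submodule.finrank_le _

lemma sub_finrank_eq_finrank_quotient {K : Type*} [Field K] {k : ℕ}
    (W : Submodule K (Fin k → K)) :
    k - finrank K W = finrank K ((Fin k → K) ⧸ W) := by
  rw [Submodule.finrank_quotient, finrank_fin_fun]

section Systems

variable {d l : ℕ} {n : Fin d → ℕ}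

lemma IsSystem.mono {l' : ℕ} {Q : Set (Tup d n)} (h : IsSystem d n l Q) (hl : l ≤ l') :
    IsSystem d n l' Q := by
  obtain ⟨S, hdep, hcodim, rfl⟩ := h
  exact ⟨S, hdep, fun j u => (hcodim j u).trans hl, rfl⟩

lemma isSystem_univ : IsSystem d n 0 Set.univ :=
  ⟨fun _ _ => ⊤, fun _ _ _ _ => rfl, fun j _ => by simp, by simp⟩

lemma IsSystem.iInter {ι : Type*} [Fintype ι] {Q : ι → Set (Tup d n)}
    (h : ∀ k, IsSystem d n l (Q k)) : IsSystem d n (Fintype.card ι * l) (⋂ k, Q k) := by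
  choose S hdep hcodim hQ using h
  refine ⟨fun j u => ⨅ k, S k j u, fun j u u' h => by simp only [hdep _ j u u' h],
    fun j u => ?_, ?_⟩
  · rw [sub_finrank_eq_finrank_quotient]
    calc _ ≤ ∑ k, finrank (ZMod 2) (_ ⧸ S k j u) := finrank_quotient_iInf_le _
      _ ≤ ∑ _k : ι, l := sum_le_sum fun k _ =>
        (sub_finrank_eq_finrank_quotient _).symm.trans_le (hcodim k j u)
      _ = _ := by simp
  · ext u
    simp [hQ, Submodule.mem_iInf, forall_comm (α := Fin d)]

end Systems

lemma IsSystem.cons {d l : ℕ} {n : Fin (d + 1) → ℕ}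
    {V : Submodule (ZMod 2) (Fin (n 0) → ZMod 2)} (hV : n 0 - finrank (ZMod 2) V ≤ l)
    {Q : (Fin (n 0) → ZMod 2) → Set (Tup d (fun i => n i.succ))}
    (hQ : ∀ y, IsSystem d (fun i => n i.succ) l (Q y)) :
    IsSystem (d + 1) n l {u | u 0 ∈ V ∧ Fin.tail u ∈ Q (u 0)} := by
  choose S hdep hcodim hQS using hQ
  refine ⟨Fin.cases
    (motive := fun j => Tup (d + 1) n → Submodule (ZMod 2) (Fin (n j) → ZMod 2))
    (fun _ => V) (fun i u => S (u 0) i (Fin.tail u)), fun j u u' h => ?_, fun j u => ?_, ?_⟩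
  · cases j using Fin.cases with
    | zero => rfl
    | succ i =>
      change S (u 0) i (Fin.tail u) = S (u' 0) i (Fin.tail u')
      rw [h 0 i.succ_pos]
      exact hdep (u' 0) i _ _ fun k hk => h k.succ (Fin.succ_lt_succ_iff.2 hk)
  · cases j using Fin.cases with
    | zero => exact hV
    | succ i => exact hcodim _ i _
  · ext u
    change _ ∧ _ ↔ ∀ j, _
    rw [Fin.forall_fin_succ, hQS]
    rfl

lemma card_tup (d : ℕ) (n : Fin d → ℕ) : Fintype.card (Tup d n) = 2 ^ ∑ i, n i := by
  simp [Fintype.card_pi, prod_pow_eq_pow_sum]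

section Fibers

variable {d : ℕ} {n : Fin (d + 1) → ℕ}

def fiber (B : Finset (Tup (d + 1) n)) (y : Fin (n 0) → ZMod 2) :
    Finset (Tup d (fun i => n i.succ)) :=
  {w | Fin.cons y w ∈ B}

lemma sum_card_fiber (B : Finset (Tup (d + 1) n)) : ∑ y, #(fiber B y) = #B := by
  classical
  calc ∑ y, #(fiber B y)
        = ∑ p : _ × Tup d (fun i => n i.succ), if Fin.cons p.1 p.2 ∈ B then 1 else 0 := by
        simp only [fiber, card_filter, Fintype.sum_prod_type]
    _ = ∑ u, if u ∈ B then 1 else 0 :=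
        Fintype.sum_equiv (Fin.consEquiv fun j => Fin (n j) → ZMod 2) _ _ fun _ => rfl
    _ = #B := by simp

end Fibers

lemma le_card_filter_of_le_sum {α : Type*} [Fintype α] (f : α → ℝ) {M δ : ℝ} (hM : 0 < M)
    (hδ : 0 ≤ δ) (hf : ∀ y, f y ≤ M) (hsum : δ * Fintype.card α * M ≤ ∑ y, f y) :
    δ / 2 * Fintype.card α ≤ #{y | δ / 2 * M ≤ f y} := by
  classical
  set S : Finset α := {y | δ / 2 * M ≤ f y}
  have hS : ∑ y ∈ S, f y ≤ #S * M := by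
    simpa using sum_le_sum fun y (_ : y ∈ S) => hf y
  have hSc : ∑ y ∈ Sᶜ, f y ≤ Fintype.card α * (δ / 2 * M) := calc
    _ ≤ ∑ _y ∈ Sᶜ, δ / 2 * M := sum_le_sum fun y hy => by
      simp only [S, mem_compl, mem_filter, mem_univ, true_and, not_le] at hy
      exact hy.le
    _ = #Sᶜ * (δ / 2 * M) := by simp
    _ ≤ _ := by gcongr; exact_mod_cast card_le_univ _
  have hsplit := sum_add_sum_compl S f
  exact le_of_mul_le_mul_right (by nlinarith) hM

section SumAtMost

variable {d c : ℕ} {n : Fin d → ℕ} {B : Finset (Tup d n)}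

lemma tensorOf_mem_sumAtMost {u : Tup d n} (hu : u ∈ B) (hc : 1 ≤ c) :
    tensorOf d n u ∈ sumAtMost d n c B :=
  ⟨{u}, by simpa using hc, by simpa using hu, by simp⟩

lemma zero_mem_sumAtMost : (0 : Arr d n) ∈ sumAtMost d n 0 B :=
  ⟨0, le_rfl, by simp, by simp⟩

lemma add_mem_sumAtMost {c' : ℕ} {x y : Arr d n} (hx : x ∈ sumAtMost d n c B)
    (hy : y ∈ sumAtMost d n c' B) : x + y ∈ sumAtMost d n (c + c') B := by
  obtain ⟨s, hs, hsB, rfl⟩ := hx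
  obtain ⟨t, ht, htB, rfl⟩ := hy
  refine ⟨s + t, by simpa using add_le_add hs ht, fun u hu => ?_, by simp⟩
  rcases Multiset.mem_add.1 hu with hu | hu
  exacts [hsB u hu, htB u hu]

lemma sum_mem_sumAtMost {ι : Type*} (s : Finset ι) {x : ι → Arr d n}
    (hx : ∀ i ∈ s, x i ∈ sumAtMost d n c B) :
    ∑ i ∈ s, x i ∈ sumAtMost d n (#s * c) B := by
  induction s using Finset.cons_induction with
  | empty => simpa using zero_mem_sumAtMost
  | cons i s hi ih =>
    rw [sum_cons, card_cons, add_mul, one_mul, add_comm _ c]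
    exact add_mem_sumAtMost (hx i (mem_cons_self i s))
      (ih fun j hj => hx j (mem_cons_of_mem hj))

end SumAtMost

section TensorLeft

variable {d : ℕ} {n : Fin (d + 1) → ℕ}

def tensorLeft :
    (Fin (n 0) → ZMod 2) →ₗ[ZMod 2] Arr d (fun i => n i.succ) →ₗ[ZMod 2] Arr (d + 1) n :=
  LinearMap.mk₂ (ZMod 2) (fun y g x => y (x 0) * g (Fin.tail x))
    (fun _ _ _ => by ext; simp [add_mul]) (fun _ _ _ => by ext; simp [mul_assoc])
    (fun _ _ _ => by ext; simp [mul_add]) (fun _ _ _ => by ext; simp [mul_left_comm])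

lemma tensorLeft_tensorOf (y : Fin (n 0) → ZMod 2) (w : Tup d (fun i => n i.succ)) :
    tensorLeft y (tensorOf d (fun i => n i.succ) w) = tensorOf (d + 1) n (Fin.cons y w) := by
  ext x
  simp [tensorLeft, tensorOf, Fin.prod_univ_succ, Fin.tail]

lemma tensorOf_eq_tensorLeft (u : Tup (d + 1) n) :
    tensorOf (d + 1) n u = tensorLeft (u 0) (tensorOf d (fun i => n i.succ) (Fin.tail u)) := by
  rw [tensorLeft_tensorOf, Fin.cons_self_tail]

lemma tensorLeft_mem_sumAtMost {c : ℕ} {B : Finset (Tup (d + 1) n)} {y : Fin (n 0) → ZMod 2}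
    {g : Arr d (fun i => n i.succ)} (hg : g ∈ sumAtMost d (fun i => n i.succ) c (fiber B y)) :
    tensorLeft y g ∈ sumAtMost (d + 1) n c B := by
  obtain ⟨s, hs, hsB, rfl⟩ := hg
  refine ⟨s.map (Fin.cons y), by simpa using hs, ?_, ?_⟩
  · simp only [Multiset.mem_map]
    rintro _ ⟨w, hw, rfl⟩
    simpa [fiber] using hsB w hw
  · rw [map_multiset_sum, Multiset.map_map, Multiset.map_map]
    congr 1
    exact Multiset.map_congr rfl fun w _ => tensorLeft_tensorOf y w

end TensorLeft

lemma le_card_dense_fibers {d : ℕ} {n : Fin (d + 1) → ℕ} {δ : ℝ} (hδ : 0 ≤ δ)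
    {B : Finset (Tup (d + 1) n)} (hB : δ * 2 ^ (∑ i, n i) ≤ #B) :
    δ / 2 * 2 ^ n 0 ≤
      #{y | δ / 2 * 2 ^ (∑ i : Fin d, n i.succ) ≤ (#(fiber B y) : ℝ)} := by
  have hcard : (Fintype.card (Fin (n 0) → ZMod 2) : ℝ) = 2 ^ n 0 := by simp
  rw [← hcard]
  refine le_card_filter_of_le_sum _ (by positivity) hδ (fun y => ?_) ?_
  · exact_mod_cast (card_le_univ _).trans_eq (card_tup d _)
  · rw [hcard, mul_assoc, ← pow_add, ← Fin.sum_univ_succ (f := n)]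
    exact_mod_cast hB.trans_eq (by exact_mod_cast (sum_card_fiber B).symm)

theorem exists_isSystem_succ {d l c : ℕ} {δ : ℝ} (hδ : 0 < δ)
    (ih : ∀ (n : Fin d → ℕ) (B : Finset (Tup d n)), δ / 2 * 2 ^ (∑ i, n i) ≤ #B →
      ∃ Q, IsSystem d n l Q ∧ ∀ u ∈ Q, tensorOf d n u ∈ sumAtMost d n c B)
    (n : Fin (d + 1) → ℕ) (B : Finset (Tup (d + 1) n)) (hB : δ * 2 ^ (∑ i, n i) ≤ #B) :
    ∃ Q, IsSystem (d + 1) n (max ⌈2 / (δ / 2) ^ 2⌉₊ (4 * l)) Q ∧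
      ∀ u ∈ Q, tensorOf (d + 1) n u ∈ sumAtMost (d + 1) n (4 * c) B := by
  classical
  set A : Finset (Fin (n 0) → ZMod 2) :=
    {y | δ / 2 * 2 ^ (∑ i : Fin d, n i.succ) ≤ (#(fiber B y) : ℝ)}
  obtain ⟨W, hWcodim, hW⟩ :=
    BooleanFourier.exists_subspace_subset_sum_four A (half_pos hδ) (le_card_dense_fibers hδ.le hB)
  have hP (y) : ∃ P, IsSystem d (fun i => n i.succ) l P ∧
      (y ∈ A → ∀ w ∈ P, tensorOf d _ w ∈ sumAtMost d _ c (fiber B y)) := by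
    by_cases hy : y ∈ A
    · obtain ⟨P, hP, hPB⟩ := ih _ (fiber B y) (mem_filter.1 hy).2
      exact ⟨P, hP, fun _ => hPB⟩
    · exact ⟨Set.univ, isSystem_univ.mono (Nat.zero_le _), fun h => absurd h hy⟩
  choose P hPsys hPB using hP
  have hdec (y) :
      ∃ a : Fin 4 → Fin (n 0) → ZMod 2, y ∈ W → (∀ k, a k ∈ A) ∧ ∑ k, a k = y := by
    by_cases hy : y ∈ W
    · obtain ⟨a, ha⟩ := hW y hy
      exact ⟨a, fun _ => ha⟩
    · exact ⟨0, fun h => absurd h hy⟩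
  choose a ha using hdec
  refine ⟨_, IsSystem.cons (V := W) (Q := fun y => ⋂ k, P (a y k)) ?_ fun y => ?_, ?_⟩
  · rw [sub_finrank_eq_finrank_quotient]
    exact hWcodim.trans (le_max_left _ _)
  · exact (IsSystem.iInter fun k => hPsys (a y k)).mono (by simp)
  · rintro u ⟨hu0, hu⟩
    obtain ⟨haA, hsum⟩ := ha _ hu0
    rw [tensorOf_eq_tensorLeft, ← hsum, map_sum, LinearMap.sum_apply]
    simpa using sum_mem_sumAtMost univ fun k _ =>
      tensorLeft_mem_sumAtMost (hPB _ (haA k) _ (Set.mem_iInter.1 hu k))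

theorem exists_isSystem (d : ℕ) {δ : ℝ} (hδ : 0 < δ) :
    ∃ l, ∀ (n : Fin d → ℕ) (B : Finset (Tup d n)), δ * 2 ^ (∑ i, n i) ≤ #B →
      ∃ Q, IsSystem d n l Q ∧ ∀ u ∈ Q, tensorOf d n u ∈ sumAtMost d n (4 ^ d) B := by
  induction d generalizing δ with
  | zero =>
    refine ⟨0, fun n B hB => ⟨Set.univ, isSystem_univ, fun u _ => ?_⟩⟩
    have hBpos : (0 : ℝ) < #B := hδ.trans_le (by simpa using hB)
    obtain ⟨b, hb⟩ : B.Nonempty := card_pos.1 (by exact_mod_cast hBpos)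
    rw [Subsingleton.elim u b]
    exact tensorOf_mem_sumAtMost hb (by simp)
  | succ d ih =>
    obtain ⟨l, hl⟩ := ih (half_pos hδ)
    exact ⟨_, fun n B hB => by simpa [pow_succ'] using exists_isSystem_succ hδ hl n B hB⟩

theorem stmt13_general (d : ℕ) :
    ∃ c : ℕ, 0 < c ∧ ∀ δ : ℝ, 0 < δ → ∃ l : ℕ,
      ∀ n : Fin d → ℕ, (∀ i, 0 < n i) →
        ∀ B' : Finset (Tup d n), δ * 2 ^ (∑ i, n i) ≤ (B'.card : ℝ) →
          ∃ Q : Set (Tup d n), IsSystem d n l Q ∧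
            ∀ u ∈ Q, tensorOf d n u ∈ sumAtMost d n c B' :=
  ⟨4 ^ d, by positivity, fun _ hδ =>
    (exists_isSystem d hδ).imp fun _ hl n _ B' hB => hl n B' hB⟩

theorem stmt13 (d : ℕ) (hd : 0 < d) :
    ∃ c : ℕ, 0 < c ∧ ∀ δ : ℝ, 0 < δ → ∃ l : ℕ,
      ∀ n : Fin d → ℕ, (∀ i, 0 < n i) →
        ∀ B' : Finset (Tup d n), δ * 2 ^ (∑ i, n i) ≤ (B'.card : ℝ) →
          ∃ Q : Set (Tup d n), IsSystem d n l Q ∧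
            ∀ u ∈ Q, tensorOf d n u ∈ sumAtMost d n c B' :=
  stmt13_general d
end

section
/- For all positive integers d, k, l there exists a positive integer K (depending only on d, k, l) with the following property: for all positive integers n_1,…,n_d, every k-system Q ⊆ F_2^{n_1}×⋯×F_2^{n_d}, and every collection of subspaces L_I ⊆ F_2^I of codimension at most l, one for each nonempty I ⊆ [d], setting T = ∩_{∅≠I⊆[d]}(L_I⊗F_2^{I^c}) ⊆ 𝒢, there exists a K-system P ⊆ Q such that u_1⊗⋯⊗u_d ∈ T for every tuple (u_1,…,u_d) ∈ P. -/
open Finset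

/-- `F_2^I = ⊗_{i ∈ I} F_2^{n_i}`, realized as arrays indexed by coordinates in `I`. -/
abbrev F2I (d : ℕ) (n : Fin d → ℕ) (I : Finset (Fin d)) :=
  ((i : {x : Fin d // x ∈ I}) → Fin (n i.1)) → ZMod 2

/-- The `I`-slice of an array `r`, obtained by fixing the coordinates outside `I` to be `z`. -/
def arrSlice (d : ℕ) (n : Fin d → ℕ) (I : Finset (Fin d)) (r : Arr d n)
    (z : (i : {x : Fin d // x ∉ I}) → Fin (n i.1)) : F2I d n I :=
  fun y => r (fun i => if h : i ∈ I then y ⟨i, h⟩ else z ⟨i, h⟩)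

/-- The subspace `L ⊗ F_2^{I^c}` of `𝒢`: arrays all of whose `I`-slices lie in `L`. -/
def cylSub (d : ℕ) (n : Fin d → ℕ) (I : Finset (Fin d))
    (L : Submodule (ZMod 2) (F2I d n I)) : Submodule (ZMod 2) (Arr d n) where
  carrier := {r | ∀ z, arrSlice d n I r z ∈ L}
  add_mem' := fun ha hb z => L.add_mem (ha z) (hb z)
  zero_mem' := fun _ => L.zero_mem
  smul_mem' := fun c _ hr z => L.smul_mem c (hr z)

/-!
For a nonempty `I ⊆ [d]` with largest element `j`, the condition `⊗_{i ∈ I} u_i ∈ L_I` is, once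
`u_1, …, u_{j-1}` are fixed, the preimage of `L_I` under a linear map in `u_j`, hence a subspace
of codimension at most `l`. Imposing these conditions at each coordinate `j`, for all `I` with
`max I = j`, gives a `2^d l`-system; intersecting it with `Q` gives a `(k + 2^d l)`-system. Every
slice of `u_1 ⊗ ⋯ ⊗ u_d` is a scalar multiple of `⊗_{i ∈ I} u_i`, so its tensors lie in `T`.
-/

open Module

section Codimension

variable {K V W : Type*} [DivisionRing K] [AddCommGroup V] [Module K V] [AddCommGroup W]
  [Module K W] [FiniteDimensional K V] [FiniteDimensional K W]

theorem finrank_sub_finrank_comap_le (f : V →ₗ[K] W) (L : Submodule K W) :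
    finrank K V - finrank K (L.comap f) ≤ finrank K W - finrank K L := by
  have hker : LinearMap.ker (L.mkQ ∘ₗ f) = L.comap f := by
    rw [LinearMap.ker_comp, Submodule.ker_mkQ]
  have h_nullity := LinearMap.finrank_range_add_finrank_ker (L.mkQ ∘ₗ f)
  have h_range := (LinearMap.range (L.mkQ ∘ₗ f)).finrank_le
  have h_quot := L.finrank_quotient_add_finrank
  rw [hker] at h_nullity
  omega

theorem finrank_sub_finrank_inf_le (A B : Submodule K V) :
    finrank K V - finrank K ↥(A ⊓ B) ≤
      (finrank K V - finrank K A) + (finrank K V - finrank K B) := by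
  have h_sup := (A ⊔ B).finrank_le
  have h_inf := (A ⊓ B).finrank_le
  have := Submodule.finrank_sup_add_finrank_inf_eq A B
  omega

theorem finrank_sub_finrank_finset_inf_le {ι : Type*} (s : Finset ι) (f : ι → Submodule K V) :
    finrank K V - finrank K ↥(s.inf f) ≤ ∑ i ∈ s, (finrank K V - finrank K (f i)) := by
  induction s using Finset.cons_induction with
  | empty => rw [Finset.inf_empty, finrank_top, Nat.sub_self]; exact Nat.zero_le _
  | cons a s ha ih =>
    rw [Finset.inf_cons, Finset.sum_cons]
    exact (finrank_sub_finrank_inf_le (f a) (s.inf f)).trans (add_le_add le_rfl ih)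

end Codimension

section RankOneTensors

variable {d : ℕ} {n : Fin d → ℕ}

theorem IsSystem.inter {k m : ℕ} {Q Q' : Set (Tup d n)} (hQ : IsSystem d n k Q)
    (hQ' : IsSystem d n m Q') : IsSystem d n (k + m) (Q ∩ Q') := by
  obtain ⟨S, hS_dep, hS_codim, rfl⟩ := hQ
  obtain ⟨S', hS'_dep, hS'_codim, rfl⟩ := hQ'
  refine ⟨fun j u => S j u ⊓ S' j u,
    fun j u u' h => congrArg₂ (· ⊓ ·) (hS_dep j u u' h) (hS'_dep j u u' h), fun j u => ?_, ?_⟩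
  · show n j - finrank _ ↥(S j u ⊓ S' j u) ≤ k + m
    have := finrank_sub_finrank_inf_le (S j u) (S' j u)
    rw [finrank_fin_fun] at this
    have := hS_codim j u
    have := hS'_codim j u
    omega
  · ext u
    simp only [Set.mem_inter_iff, Set.mem_ofPred_eq, Submodule.mem_inf, forall_and]

/-- The tensor `⊗_{i ∈ I} m_i ∈ F_2^I`, as a multilinear function of `(m_i)_{i ∈ I}`. -/
def partialTensor (I : Finset (Fin d)) :
    MultilinearMap (ZMod 2) (fun i : {x : Fin d // x ∈ I} => Fin (n i.1) → ZMod 2) (F2I d n I) :=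
  MultilinearMap.pi fun y =>
    (MultilinearMap.mkPiAlgebra (ZMod 2) _ (ZMod 2)).compLinearMap fun i => LinearMap.proj (y i)

theorem partialTensor_apply (I : Finset (Fin d))
    (m : (i : {x : Fin d // x ∈ I}) → Fin (n i.1) → ZMod 2) (y) :
    partialTensor I m y = ∏ i, m i (y i) := rfl

theorem arrSlice_tensorOf (I : Finset (Fin d)) (u : Tup d n)
    (z : (i : {x : Fin d // x ∉ I}) → Fin (n i.1)) :
    arrSlice d n I (tensorOf d n u) z =
      (∏ i : {x : Fin d // x ∉ I}, u i.1 (z i)) • partialTensor I (fun i => u i.1) := by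
  funext y
  simp only [arrSlice, tensorOf, partialTensor_apply, Pi.smul_apply, smul_eq_mul]
  rw [← Equiv.prod_comp (Equiv.sumCompl (· ∈ I)), Fintype.prod_sum_type, mul_comm]
  congr 1 <;> refine Fintype.prod_congr _ _ fun i => ?_ <;> simp [i.2]

theorem tensorOf_mem_cylSub {I : Finset (Fin d)} {L : Submodule (ZMod 2) (F2I d n I)}
    {u : Tup d n} (h : partialTensor I (fun i => u i.1) ∈ L) : tensorOf d n u ∈ cylSub d n I L :=
  fun z => by
    rw [arrSlice_tensorOf]
    exact L.smul_mem _ h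

theorem MultilinearMap.toLinearMap_congr {R ι M₂ : Type*} {M₁ : ι → Type*} [DecidableEq ι]
    [CommSemiring R] [∀ i, AddCommMonoid (M₁ i)] [∀ i, Module R (M₁ i)] [AddCommMonoid M₂]
    [Module R M₂] (f : MultilinearMap R M₁ M₂) {m m' : ∀ i, M₁ i} {i : ι}
    (h : ∀ i', i' ≠ i → m i' = m' i') : f.toLinearMap m i = f.toLinearMap m' i := by
  ext x
  simp only [MultilinearMap.toLinearMap_apply]
  congr 1
  funext i'
  by_cases hi' : i' = i
  · subst hi'
    simp
  · simp [hi', h i' hi']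

open Classical in
noncomputable def lastCoordinateConstraint
    (L : (I : Finset (Fin d)) → Submodule (ZMod 2) (F2I d n I))
    (j : Fin d) (u : Tup d n) (I : Finset (Fin d)) : Submodule (ZMod 2) (Fin (n j) → ZMod 2) :=
  if h : IsGreatest (I : Set (Fin d)) j then
    (L I).comap ((partialTensor I).toLinearMap (fun i => u i.1) ⟨j, h.1⟩)
  else ⊤

theorem lastCoordinateConstraint_congr
    (L : (I : Finset (Fin d)) → Submodule (ZMod 2) (F2I d n I))
    {j : Fin d} {u u' : Tup d n} (h : ∀ i < j, u i = u' i) (I : Finset (Fin d)) :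
    lastCoordinateConstraint L j u I = lastCoordinateConstraint L j u' I := by
  unfold lastCoordinateConstraint
  split_ifs with hI
  · rw [MultilinearMap.toLinearMap_congr]
    intro i hij
    exact h i.1 ((hI.2 i.2).lt_of_ne fun hh => hij (Subtype.ext hh))
  · rfl

theorem finrank_sub_finrank_lastCoordinateConstraint_le {l : ℕ}
    {L : (I : Finset (Fin d)) → Submodule (ZMod 2) (F2I d n I)}
    (hL : ∀ I : Finset (Fin d), I.Nonempty →
      finrank (ZMod 2) (F2I d n I) - finrank (ZMod 2) (L I) ≤ l)
    (j : Fin d) (u : Tup d n) (I : Finset (Fin d)) :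
    n j - finrank (ZMod 2) (lastCoordinateConstraint L j u I) ≤ l := by
  unfold lastCoordinateConstraint
  by_cases hI : IsGreatest (I : Set (Fin d)) j
  · rw [dif_pos hI]
    have := finrank_sub_finrank_comap_le
      ((partialTensor I).toLinearMap (fun i => u i.1) ⟨j, hI.1⟩) (L I)
    rw [finrank_fin_fun] at this
    exact this.trans (hL I ⟨j, hI.1⟩)
  · rw [dif_neg hI, finrank_top, finrank_fin_fun, Nat.sub_self]
    exact Nat.zero_le l

theorem partialTensor_mem_of_mem_lastCoordinateConstraint
    {L : (I : Finset (Fin d)) → Submodule (ZMod 2) (F2I d n I)} {u : Tup d n} {I : Finset (Fin d)}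
    (hI : I.Nonempty) (hu : u (I.max' hI) ∈ lastCoordinateConstraint L (I.max' hI) u I) :
    partialTensor I (fun i => u i.1) ∈ L I := by
  unfold lastCoordinateConstraint at hu
  rw [dif_pos (I.isGreatest_max' hI)] at hu
  simpa using hu

noncomputable def lastCoordinateSystem
    (L : (I : Finset (Fin d)) → Submodule (ZMod 2) (F2I d n I)) :
    Set (Tup d n) :=
  {u | ∀ j, u j ∈ (Finset.univ : Finset (Finset (Fin d))).inf (lastCoordinateConstraint L j u)}

theorem isSystem_lastCoordinateSystem {l : ℕ}
    {L : (I : Finset (Fin d)) → Submodule (ZMod 2) (F2I d n I)}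
    (hL : ∀ I : Finset (Fin d), I.Nonempty →
      finrank (ZMod 2) (F2I d n I) - finrank (ZMod 2) (L I) ≤ l) :
    IsSystem d n (2 ^ d * l) (lastCoordinateSystem L) := by
  refine ⟨fun j u => Finset.univ.inf (lastCoordinateConstraint L j u),
    fun j u u' h => Finset.inf_congr rfl fun I _ => lastCoordinateConstraint_congr L h I,
    fun j u => ?_, rfl⟩
  calc n j - finrank (ZMod 2) ↥(Finset.univ.inf (lastCoordinateConstraint L j u))
      ≤ ∑ I : Finset (Fin d), (n j - finrank (ZMod 2) (lastCoordinateConstraint L j u I)) := by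
        simpa only [finrank_fin_fun] using
          finrank_sub_finrank_finset_inf_le Finset.univ (lastCoordinateConstraint L j u)
    _ ≤ ∑ _I : Finset (Fin d), l :=
        Finset.sum_le_sum fun I _ => finrank_sub_finrank_lastCoordinateConstraint_le hL j u I
    _ = 2 ^ d * l := by simp

theorem tensorOf_mem_cylSub_of_mem_lastCoordinateSystem
    {L : (I : Finset (Fin d)) → Submodule (ZMod 2) (F2I d n I)} {u : Tup d n}
    (hu : u ∈ lastCoordinateSystem L) {I : Finset (Fin d)} (hI : I.Nonempty) :
    tensorOf d n u ∈ cylSub d n I (L I) :=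
  tensorOf_mem_cylSub <| partialTensor_mem_of_mem_lastCoordinateConstraint hI <|
    Finset.inf_le (f := lastCoordinateConstraint L _ u) (Finset.mem_univ I) (hu (I.max' hI))

end RankOneTensors

theorem stmt14_general (d k l : ℕ) (hk : 0 < k) :
    ∃ K : ℕ, 0 < K ∧
      ∀ n : Fin d → ℕ, (∀ i, 0 < n i) →
        ∀ Q : Set (Tup d n), IsSystem d n k Q →
          ∀ L : (I : Finset (Fin d)) → Submodule (ZMod 2) (F2I d n I),
            (∀ I : Finset (Fin d), I.Nonempty →
              Module.finrank (ZMod 2) (F2I d n I) - Module.finrank (ZMod 2) (L I) ≤ l) →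
            ∃ P : Set (Tup d n), P ⊆ Q ∧ IsSystem d n K P ∧
              ∀ u ∈ P, ∀ I : Finset (Fin d), I.Nonempty →
                tensorOf d n u ∈ cylSub d n I (L I) :=
  ⟨k + 2 ^ d * l, Nat.add_pos_left hk _, fun _ _ Q hQ L hL =>
    ⟨Q ∩ lastCoordinateSystem L, Set.inter_subset_left,
      hQ.inter (isSystem_lastCoordinateSystem hL),
      fun _ hu _ hI => tensorOf_mem_cylSub_of_mem_lastCoordinateSystem hu.2 hI⟩⟩

theorem stmt14 (d k l : ℕ) (hd : 0 < d) (hk : 0 < k) (hl : 0 < l) :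
    ∃ K : ℕ, 0 < K ∧
      ∀ n : Fin d → ℕ, (∀ i, 0 < n i) →
        ∀ Q : Set (Tup d n), IsSystem d n k Q →
          ∀ L : (I : Finset (Fin d)) → Submodule (ZMod 2) (F2I d n I),
            (∀ I : Finset (Fin d), I.Nonempty →
              Module.finrank (ZMod 2) (F2I d n I) - Module.finrank (ZMod 2) (L I) ≤ l) →
            ∃ P : Set (Tup d n), P ⊆ Q ∧ IsSystem d n K P ∧
              ∀ u ∈ P, ∀ I : Finset (Fin d), I.Nonempty →
                tensorOf d n u ∈ cylSub d n I (L I) :=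
  stmt14_general d k l hk
end

section
/- Let n and d be positive integers and let V be a subspace of F_2^n of dimension d such that every nonzero v ∈ V has Hamming weight |v| ≥ n^{8/15}. Then V has a basis v_1,…,v_d such that for every i ∈ {1,…,d}, the set I_i = {k ∈ [n] : v_i(k) = 1 and v_j(k) = 0 for all j ≠ i} has size at least n^{8/15}/2^{d−1}. -/
/-!
Send each coordinate `k` to the functional `v ↦ v k` on `V`, and call a functional heavy if at
least `n^{8/15} / 2^{d-1}` coordinates are sent to it. The heavy functionals span `V*`: otherwise
some nonzero `v ∈ V` is killed by all of them, and then the support of `v` is covered by the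
fibres of the `2^{d-1}` functionals not vanishing at `v`, all light, so `|v| < n^{8/15}`. Take the
basis of `V` dual to a basis of `V*` made of heavy functionals: every coordinate sent to its
`i`-th coordinate functional has `v_i = 1` and `v_j = 0` for `j ≠ i`.
-/

open Finset Module

theorem Module.Dual.exists_ne_zero_forall_apply_eq_zero_of_span_ne_top {K V : Type*} [Field K]
    [AddCommGroup V] [Module K V] [FiniteDimensional K V] {S : Set (Dual K V)}
    (hS : Submodule.span K S ≠ ⊤) : ∃ v : V, v ≠ 0 ∧ ∀ ℓ ∈ S, ℓ v = 0 := by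
  have hcoann : (Submodule.span K S).dualCoannihilator ≠ ⊥ := fun h => hS <| by
    rw [← Subspace.dualCoannihilator_dualAnnihilator_eq (W := Submodule.span K S), h,
      Submodule.dualAnnihilator_bot]
  obtain ⟨v, hv, hv0⟩ := Submodule.exists_mem_ne_zero_of_ne_bot hcoann
  exact ⟨v, hv0, fun ℓ hℓ =>
    (Submodule.mem_dualCoannihilator v).mp hv ℓ (Submodule.subset_span hℓ)⟩

theorem Module.Basis.exists_coord_mem_of_span_eq_top {K V : Type*} [Field K] [AddCommGroup V]
    [Module K V] [FiniteDimensional K V] {S : Set (Dual K V)}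
    (hS : Submodule.span K S = ⊤) : ∃ b : Basis (Fin (finrank K V)) K V, ∀ i, b.coord i ∈ S := by
  let B₀ := Basis.ofSpan hS.ge
  let B := B₀.reindex (B₀.indexEquiv (finBasisOfFinrankEq K (Dual K V) Subspace.dual_finrank_eq))
  refine ⟨B.dualBasis.map (evalEquiv K V).symm, fun i => ?_⟩
  have hcoord : (B.dualBasis.map (evalEquiv K V).symm).coord i = B i := by
    ext v
    simp [Basis.coord_apply, Basis.map_repr]
  rw [hcoord]
  exact Basis.ofSpan_subset hS.ge (by simp [B, B₀])

theorem LinearMap.two_mul_card_filter_ne_zero {W : Type*} [AddCommGroup W] [Module (ZMod 2) W]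
    [Fintype W] (f : W →ₗ[ZMod 2] ZMod 2) (hf : f ≠ 0) :
    2 * #{w | f w ≠ 0} = Fintype.card W := by
  obtain ⟨w₀, hw₀⟩ : ∃ w₀, f w₀ ≠ 0 := by
    by_contra! h
    exact hf (LinearMap.ext h)
  -- translation by `w₀` exchanges `ker f` and its complement
  have hswap : #{w | f w ≠ 0} = #{w | ¬ f w ≠ 0} := by
    refine card_equiv (Equiv.addRight w₀) fun w => ?_
    simp only [mem_filter, mem_univ, true_and, Equiv.coe_addRight, map_add]
    revert hw₀
    generalize f w = a
    generalize f w₀ = b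
    decide +revert
  rw [two_mul, ← card_univ]
  nth_rw 2 [hswap]
  exact card_filter_add_card_filter_not _

theorem Module.card_dual_zmod_two {V : Type*} [AddCommGroup V] [Module (ZMod 2) V]
    [Fintype (Dual (ZMod 2) V)] : Fintype.card (Dual (ZMod 2) V) = 2 ^ finrank (ZMod 2) V := by
  rw [card_eq_pow_finrank (K := ZMod 2), ZMod.card, Subspace.dual_finrank_eq]

theorem span_setOf_le_card_fiber_eq_top {V ι : Type*} [AddCommGroup V] [Module (ZMod 2) V]
    [FiniteDimensional (ZMod 2) V] [Fintype (Dual (ZMod 2) V)] [DecidableEq (Dual (ZMod 2) V)]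
    [Fintype ι] (e : ι → Dual (ZMod 2) V) {t : ℝ}
    (hwt : ∀ v : V, v ≠ 0 → t ≤ #{k | e k v ≠ 0}) :
    Submodule.span (ZMod 2) {ℓ | 2 * t / 2 ^ finrank (ZMod 2) V ≤ #{k | e k = ℓ}} = ⊤ := by
  by_contra hspan
  obtain ⟨v, hv, hvS⟩ := Dual.exists_ne_zero_forall_apply_eq_zero_of_span_ne_top hspan
  set L : Finset (Dual (ZMod 2) V) := {ℓ | ℓ v ≠ 0}
  have hL : (2 : ℝ) * #L = 2 ^ finrank (ZMod 2) V := by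
    have hev : Dual.eval (ZMod 2) V v ≠ 0 := fun h =>
      hv <| (forall_dual_apply_eq_zero_iff (ZMod 2) v).mp (LinearMap.congr_fun h)
    exact_mod_cast (LinearMap.two_mul_card_filter_ne_zero _ hev).trans card_dual_zmod_two
  have hL_ne : L.Nonempty := by
    rw [← card_pos, ← Nat.cast_pos (α := ℝ)]
    linarith [pow_pos (two_pos (α := ℝ)) (finrank (ZMod 2) V)]
  have hlight : ∀ ℓ ∈ L, (#{k | e k = ℓ} : ℝ) < 2 * t / 2 ^ finrank (ZMod 2) V :=
    fun ℓ hℓ => not_le.mp fun hheavy => (mem_filter.mp hℓ).2 (hvS ℓ hheavy)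
  have hsupport : (#{k | e k v ≠ 0} : ℝ) < t := calc
    (#{k | e k v ≠ 0} : ℝ) = ∑ ℓ ∈ L, (#{k | e k = ℓ} : ℝ) := by
      rw [← Nat.cast_sum, sum_card_fiberwise_eq_card_filter univ L e]
      simp only [L, mem_filter, mem_univ, true_and]
    _ < ∑ ℓ ∈ L, 2 * t / 2 ^ finrank (ZMod 2) V := sum_lt_sum_of_nonempty hL_ne hlight
    _ = t := by
      rw [sum_const, nsmul_eq_mul, ← hL]
      field_simp
  exact (hwt v hv).not_gt hsupport

theorem stmt18_general (n d : ℕ)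
    (V : Submodule (ZMod 2) (Fin n → ZMod 2))
    (hdim : Module.finrank (ZMod 2) V = d)
    (hwt : ∀ v : Fin n → ZMod 2, v ∈ V → v ≠ 0 →
      (n : ℝ) ^ ((8 : ℝ) / 15) ≤ (hammingNorm v : ℝ)) :
    ∃ b : Module.Basis (Fin d) (ZMod 2) V,
      ∀ i : Fin d,
        (n : ℝ) ^ ((8 : ℝ) / 15) / 2 ^ (d - 1) ≤
          ((Finset.univ.filter (fun k : Fin n =>
            ((b i : Fin n → ZMod 2) k = 1 ∧
              ∀ j : Fin d, j ≠ i → (b j : Fin n → ZMod 2) k = 0))).card : ℝ) := by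
  classical
  subst hdim
  have : Finite (Dual (ZMod 2) V) := Module.finite_of_finite (ZMod 2)
  have := Fintype.ofFinite (Dual (ZMod 2) V)
  let e : Fin n → Dual (ZMod 2) V := fun k => (LinearMap.proj k).comp V.subtype
  have hwt' : ∀ v : V, v ≠ 0 → (n : ℝ) ^ ((8 : ℝ) / 15) ≤ #{k | e k v ≠ 0} := fun v hv =>
    hwt v v.2 (by simpa using hv)
  obtain ⟨b, hb⟩ := Basis.exists_coord_mem_of_span_eq_top (span_setOf_le_card_fiber_eq_top e hwt')
  refine ⟨b, fun i => ?_⟩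
  have hpow : (2 : ℝ) ^ finrank (ZMod 2) V = 2 * 2 ^ (finrank (ZMod 2) V - 1) := by
    rw [← pow_succ']; congr 1; have := i.pos; omega
  have hheavy : 2 * (n : ℝ) ^ ((8 : ℝ) / 15) / 2 ^ finrank (ZMod 2) V ≤ _ := hb i
  refine (le_of_eq ?_).trans (hheavy.trans (Nat.cast_le.mpr (card_le_card fun k hk => ?_)))
  · rw [hpow, mul_div_mul_left _ _ two_ne_zero]
  have hbk : ∀ j, (b j : Fin n → ZMod 2) k = if j = i then 1 else 0 := fun j => by
    rw [← b.repr_self_apply, ← Basis.coord_apply, ← (mem_filter.mp hk).2]; rfl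
  simp +contextual [hbk]

theorem stmt18 (n d : ℕ) (hn : 0 < n) (hd : 0 < d)
    (V : Submodule (ZMod 2) (Fin n → ZMod 2))
    (hdim : Module.finrank (ZMod 2) V = d)
    (hwt : ∀ v : Fin n → ZMod 2, v ∈ V → v ≠ 0 →
      (n : ℝ) ^ ((8 : ℝ) / 15) ≤ (hammingNorm v : ℝ)) :
    ∃ b : Module.Basis (Fin d) (ZMod 2) V,
      ∀ i : Fin d,
        (n : ℝ) ^ ((8 : ℝ) / 15) / 2 ^ (d - 1) ≤
          ((Finset.univ.filter (fun k : Fin n =>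
            ((b i : Fin n → ZMod 2) k = 1 ∧
              ∀ j : Fin d, j ≠ i → (b j : Fin n → ZMod 2) k = 0))).card : ℝ) :=
  stmt18_general n d V hdim hwt
end
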